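/- arXiv:1412.8448 — 10 statements merged into one kernel-verified Lean document; each statement's English description precedes it below -/
import Mathlib

section
/- Let B : ℝ^q → Matrix (Fin q) (Fin p) ℝ be a map assigning to each point y a q×p matrix, and for each y let the 'fiber through y' be the affine p-plane {(t, B(y)t + y) : t ∈ ℝ^p} ⊆ ℝ^p × ℝ^q. Let A(y) denote the q×(p+1) matrix obtained by appending the column vector y to B(y). Then for distinct y, z ∈ ℝ^q, the fibers through y and z are skew (i.e., they do not intersect and contain no parallel nonzero directions) if and only if Ker(A(y) − A(z)) = 0. -/
open Matrix

/-- Kernel criterion for skewness of two affine fibers given by `t ↦ B(y)t + y`. -/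
theorem skew_iff_ker_trivial (p q : ℕ)
    (B : (Fin q → ℝ) → Matrix (Fin q) (Fin p) ℝ)
    (A : (Fin q → ℝ) → Matrix (Fin q) (Fin (p + 1)) ℝ)
    (hA : ∀ y i (j : Fin (p + 1)),
      A y i j = if h : (j : ℕ) < p then B y i ⟨j, h⟩ else y i)
    (fiber : (Fin q → ℝ) → Set ((Fin p → ℝ) × (Fin q → ℝ)))
    (hfiber : ∀ y, fiber y = {x | ∃ t : Fin p → ℝ, x = (t, (B y).mulVec t + y)})
    (y z : Fin q → ℝ) (hyz : y ≠ z) :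
    (fiber y ∩ fiber z = ∅ ∧
      ∀ t : Fin p → ℝ, t ≠ 0 → (B y).mulVec t ≠ (B z).mulVec t) ↔
      ∀ x : Fin (p + 1) → ℝ, (A y - A z).mulVec x = 0 → x = 0 := by
  have key : ∀ x : Fin (p + 1) → ℝ,
      (A y - A z).mulVec x =
        (B y).mulVec (fun j => x j.castSucc) - (B z).mulVec (fun j => x j.castSucc)
          + x (Fin.last p) • (y - z) := by
    intro x
    funext i
    simp only [mulVec, dotProduct, Matrix.sub_apply, Pi.add_apply, Pi.smul_apply,
      Pi.sub_apply, smul_eq_mul, Fin.sum_univ_castSucc, hA, Fin.coe_castSucc,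
      Fin.is_lt, dif_pos, Fin.val_last, lt_irrefl, dif_neg, Fin.eta, dite_false, dif_neg,
      ← Finset.sum_sub_distrib]
    ring_nf
    simp only [mul_comm (x _) (B z i _)]; ring
  constructor
  · rintro ⟨hdisj, hdir⟩ x hx
    rw [key] at hx
    set t : Fin p → ℝ := fun j => x j.castSucc with ht
    set c := x (Fin.last p) with hc
    by_cases hc0 : c = 0
    · rw [hc0, zero_smul, add_zero, sub_eq_zero] at hx
      have ht0 : t = 0 := by
        by_contra h
        exact hdir t h hx
      funext j
      refine Fin.lastCases ?_ ?_ j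
      · exact hc0
      · intro k
        exact congrFun ht0 k
    · exfalso
      have hmem : (c⁻¹ • t, (B y).mulVec (c⁻¹ • t) + y) ∈ fiber y ∩ fiber z := by
        constructor
        · rw [hfiber]; exact ⟨c⁻¹ • t, rfl⟩
        · rw [hfiber]
          refine ⟨c⁻¹ • t, ?_⟩
          have : (B y).mulVec (c⁻¹ • t) + y = (B z).mulVec (c⁻¹ • t) + z := by
            have h1 : (B y).mulVec t - (B z).mulVec t = -(c • (y - z)) := by
              linear_combination hx
            have h2 : (B y).mulVec (c⁻¹ • t) - (B z).mulVec (c⁻¹ • t) = -(y - z) := by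
              rw [mulVec_smul, mulVec_smul, ← smul_sub, h1, smul_neg, smul_smul,
                inv_mul_cancel₀ hc0, one_smul]
            linear_combination h2
          rw [this]
      rw [hdisj] at hmem
      exact hmem
  · intro hker
    constructor
    · ext w
      simp only [Set.mem_inter_iff, Set.mem_empty_iff_false, iff_false, not_and]
      intro hw1 hw2
      rw [hfiber] at hw1 hw2
      obtain ⟨t1, h1⟩ := hw1
      obtain ⟨t2, h2⟩ := hw2
      have ht12 : t1 = t2 := by
        have := congrArg Prod.fst h1
        have := congrArg Prod.fst h2
        simp_all
      subst ht12
      have heq : (B y).mulVec t1 + y = (B z).mulVec t1 + z := by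
        have e1 := congrArg Prod.snd h1
        have e2 := congrArg Prod.snd h2
        simp only at e1 e2
        rw [← e1, ← e2]
      set x : Fin (p + 1) → ℝ := Fin.snoc t1 1 with hxdef
      have hx0 : (A y - A z).mulVec x = 0 := by
        rw [key]
        simp only [hxdef, Fin.snoc_castSucc, Fin.snoc_last, one_smul]
        linear_combination heq
      have := hker x hx0
      have h1 : x (Fin.last p) = 1 := by simp [hxdef]
      rw [this] at h1
      simp at h1
    · intro t ht hB
      set x : Fin (p + 1) → ℝ := Fin.snoc t 0 with hxdef
      have hx0 : (A y - A z).mulVec x = 0 := by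
        rw [key]
        simp only [hxdef, Fin.snoc_castSucc, Fin.snoc_last, zero_smul, add_zero]
        rw [hB, sub_self]
      have := hker x hx0
      apply ht
      funext j
      have := congrFun this j.castSucc
      simpa [hxdef] using this
end

section
/- Let B : ℂ^2 → ℂ^2 be defined by B(y₁, y₂) = (conj(y₂), −conj(y₁)). Then for every (t, η₁, η₂) ∈ ℂ × ℂ² there exists a unique y = (y₁, y₂) ∈ ℂ² such that B(y)·t + y = (η₁, η₂), i.e., conj(y₂)t + y₁ = η₁ and −conj(y₁)t + y₂ = η₂. Consequently the affine complex lines {(t, B(y)t + y) : t ∈ ℂ} for y ∈ ℂ² partition ℂ³. -/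
/-- The complex line through `y ∈ ℂ²` associated to `B(y₁,y₂) = (conj y₂, -conj y₁)`:
the graph of `t ↦ B(y)t + y` in `ℂ³ = ℂ × ℂ²`. -/
def complexFiber (y : ℂ × ℂ) : Set (ℂ × ℂ × ℂ) :=
  {x | ∃ t : ℂ, x = (t, (starRingEnd ℂ) y.2 * t + y.1, -((starRingEnd ℂ) y.1) * t + y.2)}

lemma key (t η₁ η₂ : ℂ) : ∃! y : ℂ × ℂ,
    (starRingEnd ℂ) y.2 * t + y.1 = η₁ ∧ -((starRingEnd ℂ) y.1) * t + y.2 = η₂ := by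
  set c : ℂ := 1 + (starRingEnd ℂ) t * t with hc
  have hcr : (starRingEnd ℂ) c = c := by
    simp [hc, map_add, map_mul, Complex.conj_conj, mul_comm]
  have hc0 : c ≠ 0 := by
    have : (starRingEnd ℂ) t * t = (Complex.normSq t : ℂ) := by
      rw [mul_comm, Complex.mul_conj]
    rw [hc, this]
    intro h
    have := congrArg Complex.re h
    simp at this
    nlinarith [Complex.normSq_nonneg t]
  refine ⟨((η₁ - t * (starRingEnd ℂ) η₂) / c, (η₂ + t * (starRingEnd ℂ) η₁) / c), ⟨?_, ?_⟩, ?_⟩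
  · simp only [map_div₀, map_add, map_sub, map_mul, Complex.conj_conj, hcr]
    field_simp
    ring
  · simp only [map_div₀, map_add, map_sub, map_mul, map_neg, Complex.conj_conj, hcr]
    field_simp
    ring
  · rintro ⟨z₁, z₂⟩ ⟨h1, h2⟩
    simp only [Prod.mk.injEq]
    have h2' := congrArg (starRingEnd ℂ) h2
    simp only [map_add, map_mul, map_neg, Complex.conj_conj] at h2'
    have hz1 : z₁ * c = η₁ - t * (starRingEnd ℂ) η₂ := by
      have := h1
      rw [hc]; rw [← h2']; ring_nf
      rw [← h1]; ring
    have h1' := congrArg (starRingEnd ℂ) h1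
    simp only [map_add, map_mul, Complex.conj_conj] at h1'
    have hz2 : z₂ * c = η₂ + t * (starRingEnd ℂ) η₁ := by
      rw [hc, ← h1', ← h2]; ring
    constructor
    · field_simp
      linear_combination hz1
    · field_simp
      linear_combination hz2

/-- For `B(y₁,y₂) = (conj y₂, -conj y₁)`, every point `(t, η₁, η₂) ∈ ℂ³` lies on the fiber
through a unique `y ∈ ℂ²`; consequently the fibers partition `ℂ³`. -/
theorem complex_fibration_exists_unique :
    (∀ t η₁ η₂ : ℂ, ∃! y : ℂ × ℂ,
      (starRingEnd ℂ) y.2 * t + y.1 = η₁ ∧ -((starRingEnd ℂ) y.1) * t + y.2 = η₂) ∧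
    (⋃ y : ℂ × ℂ, complexFiber y) = Set.univ ∧
    Pairwise (Function.onFun Disjoint complexFiber) := by
  refine ⟨key, ?_, ?_⟩
  · ext ⟨t, a, b⟩
    simp only [Set.mem_iUnion, Set.mem_univ, iff_true]
    obtain ⟨y, ⟨hy1, hy2⟩, -⟩ := key t a b
    refine ⟨y, t, ?_⟩
    simp only [complexFiber, Set.mem_setOf_eq, Prod.mk.injEq]
    exact ⟨trivial, by linear_combination -hy1, by linear_combination -hy2⟩
  · intro y y' hne
    rw [Function.onFun, Set.disjoint_left]
    rintro ⟨t, a, b⟩ ⟨s, hs⟩ ⟨s', hs'⟩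
    rw [Prod.mk.injEq, Prod.mk.injEq] at hs hs'
    obtain ⟨rfl, ha, hb⟩ := hs
    obtain ⟨rfl, ha', hb'⟩ := hs'
    obtain ⟨z, -, huniq⟩ := key t a b
    exact hne ((huniq y ⟨ha.symm, hb.symm⟩).trans (huniq y' ⟨ha'.symm, hb'.symm⟩).symm)
end

section
/- With B(y₁,y₂) = (conj(y₂), −conj(y₁)) on ℂ² and A(y) the 2×2 complex matrix with columns B(y) and y, for all distinct y, z ∈ ℂ² the matrix A(y) − A(z) has trivial kernel over ℂ; hence the complex lines t ↦ B(y)t + y (y ∈ ℂ²) are pairwise skew in ℂ³. -/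
open Matrix

lemma aux_sum_ne (a b : ℂ) (h : ¬ (a = 0 ∧ b = 0)) :
    (starRingEnd ℂ) a * a + (starRingEnd ℂ) b * b ≠ 0 := by
  have ha := Complex.normSq_nonneg a
  have hb := Complex.normSq_nonneg b
  have : (starRingEnd ℂ) a * a + (starRingEnd ℂ) b * b
      = ((Complex.normSq a + Complex.normSq b : ℝ) : ℂ) := by
    push_cast [← Complex.normSq_eq_conj_mul_self]
    ring
  rw [this]
  norm_cast
  intro hsum
  have ha0 : Complex.normSq a = 0 := by linarith
  have hb0 : Complex.normSq b = 0 := by linarith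
  exact h ⟨Complex.normSq_eq_zero.mp ha0, Complex.normSq_eq_zero.mp hb0⟩

/-- With `B(y₁,y₂) = (conj y₂, -conj y₁)` and `A(y)` the 2×2 matrix with columns `B(y)` and `y`,
for distinct `y, z` the matrix `A(y) - A(z)` has trivial kernel over `ℂ`; hence the complex
lines `t ↦ B(y)t + y` are pairwise skew in `ℂ³`: they neither intersect nor have
ℂ-proportional directions. -/
theorem complex_fibers_pairwise_skew
    (A : ℂ × ℂ → Matrix (Fin 2) (Fin 2) ℂ)
    (hA : ∀ y, A y = !![(starRingEnd ℂ) y.2, y.1; -((starRingEnd ℂ) y.1), y.2])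
    (y z : ℂ × ℂ) (hyz : y ≠ z) :
    (∀ x : Fin 2 → ℂ, (A y - A z).mulVec x = 0 → x = 0) ∧
    complexFiber y ∩ complexFiber z = ∅ ∧
    ∀ c : ℂ, c • ((1 : ℂ), (starRingEnd ℂ) y.2, -((starRingEnd ℂ) y.1)) ≠
      ((1 : ℂ), (starRingEnd ℂ) z.2, -((starRingEnd ℂ) z.1)) := by
  set a := y.1 - z.1 with ha_def
  set b := y.2 - z.2 with hb_def
  have hab : ¬ (a = 0 ∧ b = 0) := by
    rintro ⟨h1, h2⟩
    apply hyz
    have : y.1 = z.1 := by linear_combination h1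
    have : y.2 = z.2 := by linear_combination h2
    exact Prod.ext ‹y.1 = z.1› ‹y.2 = z.2›
  have key := aux_sum_ne a b hab
  refine ⟨?_, ?_, ?_⟩
  · intro x hx
    have h0 := congrFun hx 0
    have h1 := congrFun hx 1
    simp [hA, Matrix.mulVec, dotProduct, Fin.sum_univ_two] at h0 h1
    have e0 : (starRingEnd ℂ) b * x 0 + a * x 1 = 0 := by
      simp only [ha_def, hb_def, map_sub]; ring_nf; linear_combination h0
    have e1 : -((starRingEnd ℂ) a) * x 0 + b * x 1 = 0 := by
      simp only [ha_def, hb_def, map_sub]; ring_nf; linear_combination h1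
    have hx0 : x 0 = 0 := by
      have : ((starRingEnd ℂ) a * a + (starRingEnd ℂ) b * b) * x 0 = 0 := by
        linear_combination b * e0 + (- a) * e1
      exact (mul_eq_zero.mp this).resolve_left key
    have hx1 : x 1 = 0 := by
      have : ((starRingEnd ℂ) a * a + (starRingEnd ℂ) b * b) * x 1 = 0 := by
        linear_combination (starRingEnd ℂ) a * e0 + (starRingEnd ℂ) b * e1
      exact (mul_eq_zero.mp this).resolve_left key
    funext i
    fin_cases i <;> simpa [hx0, hx1]
  · ext p
    simp only [Set.mem_inter_iff, Set.mem_empty_iff_false, iff_false, complexFiber,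
      Set.mem_setOf_eq]
    rintro ⟨⟨t, rfl⟩, s, hs⟩
    rw [Prod.mk.injEq, Prod.mk.injEq] at hs
    obtain ⟨hts, h2, h3⟩ := hs
    subst hts
    -- h2 : conj y.2 * t + y.1 = conj z.2 * t + z.1, h3 similarly
    have e2 : (starRingEnd ℂ) b * t = -a := by
      simp only [ha_def, hb_def, map_sub]; linear_combination h2
    have e3 : (starRingEnd ℂ) a * t = b := by
      simp only [ha_def, hb_def, map_sub]; linear_combination -h3
    have e2' : b * (starRingEnd ℂ) t = -(starRingEnd ℂ) a := by
      have := congrArg (starRingEnd ℂ) e2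
      simpa [mul_comm] using this
    have htne : (starRingEnd ℂ) t * t + 1 ≠ 0 := by
      have h := Complex.normSq_nonneg t
      have : (starRingEnd ℂ) t * t + 1 = ((Complex.normSq t + 1 : ℝ) : ℂ) := by
        push_cast [← Complex.normSq_eq_conj_mul_self]; ring
      rw [this]
      norm_cast
      positivity
    have hca : (starRingEnd ℂ) a = 0 := by
      have h : (starRingEnd ℂ) a * ((starRingEnd ℂ) t * t + 1) = 0 := by
        linear_combination (starRingEnd ℂ) t * e3 + e2'
      exact (mul_eq_zero.mp h).resolve_right htne
    have ha0 : a = 0 := by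
      have := congrArg (starRingEnd ℂ) hca
      simpa using this
    have hb0 : b = 0 := by
      rw [← e3, hca, zero_mul]
    exact hab ⟨ha0, hb0⟩
  · intro c hc
    simp only [Prod.smul_mk, smul_eq_mul, Prod.mk.injEq, mul_one] at hc
    obtain ⟨hc1, hc2, hc3⟩ := hc
    subst hc1
    apply hab
    constructor
    · have := congrArg (starRingEnd ℂ) hc3
      simp only [ha_def, map_neg, Complex.conj_conj, one_mul] at hc3 ⊢
      have : y.1 = z.1 := by
        have := congrArg (starRingEnd ℂ) hc3
        simpa using this
      linear_combination this
    · have : y.2 = z.2 := by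
        have := congrArg (starRingEnd ℂ) hc2
        simpa using this
      simp only [hb_def]
      linear_combination this
end

section
/- Let B = (B₁, B₂) : ℝ² → ℝ² be a map with B(0)=0 such that y₂B₁(y) − y₁B₂(y) < 0 for all y ≠ 0. For s ∈ [0,1] define B_s(y) = s·(−y₂, y₁) + (1−s)·B(y), and let ℓ_s(y) be the line in ℝ³ through (y₁, y₂, 0) with direction (B_s(y)₁, B_s(y)₂, 1). Then for every y ∈ ℝ² and every s ∈ [0,1], dist(0, ℓ_s(y)) ≥ dist(0, ℓ_0(y)). -/
/-- Core polynomial inequality: the minimal point on the `s = 0` line is at most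
any point on the `ℓ_s` line, in squared norms. -/
lemma hopf_core (u v a b s t : ℝ) (hs0 : 0 ≤ s) (hs1 : s ≤ 1)
    (hab : v * a - u * b ≤ 0) :
    (u + (-(u * a + v * b) / (a ^ 2 + b ^ 2 + 1)) * a) ^ 2 +
      (v + (-(u * a + v * b) / (a ^ 2 + b ^ 2 + 1)) * b) ^ 2 +
      (-(u * a + v * b) / (a ^ 2 + b ^ 2 + 1)) ^ 2 ≤
    (u + t * (s * (-v) + (1 - s) * a)) ^ 2 +
      (v + t * (s * u + (1 - s) * b)) ^ 2 + t ^ 2 := by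
  have hM : (0:ℝ) < a ^ 2 + b ^ 2 + 1 := by positivity
  have h1 : (u + (-(u * a + v * b) / (a ^ 2 + b ^ 2 + 1)) * a) ^ 2 +
      (v + (-(u * a + v * b) / (a ^ 2 + b ^ 2 + 1)) * b) ^ 2 +
      (-(u * a + v * b) / (a ^ 2 + b ^ 2 + 1)) ^ 2
      = u ^ 2 + v ^ 2 - (u * a + v * b) ^ 2 / (a ^ 2 + b ^ 2 + 1) := by
    field_simp
    ring
  rw [h1, sub_le_iff_le_add, ← sub_le_iff_le_add', le_div_iff₀ hM]
  have h2 : (0:ℝ) ≤ t ^ 2 * (a ^ 2 + b ^ 2 + 1) := by positivity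
  have h3 : (0:ℝ) ≤ s * (1 - s) * (u * b - v * a) :=
    mul_nonneg (mul_nonneg hs0 (by linarith)) (by linarith)
  have h4 : (0:ℝ) ≤ s * (2 - s) := mul_nonneg hs0 (by linarith)
  have h5 : (0:ℝ) ≤ s ^ 2 * (u ^ 2 + v ^ 2) := by positivity
  nlinarith [sq_nonneg ((u * a + v * b) + t * (1 - s) * (a ^ 2 + b ^ 2 + 1)),
    mul_nonneg h2 h3, mul_nonneg h2 h4, mul_nonneg h2 h5]

/-- Homotoping a map `B : ℝ² → ℝ²` (with `B(0) = 0` and negative orientation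
`y₂B₁(y) − y₁B₂(y) < 0` for `y ≠ 0`) linearly toward the Hopf map `H(y) = (−y₂, y₁)`
does not decrease the distance from the origin of the corresponding lines
`ℓ_s(y) = (y, 0) + ℝ·(B_s(y), 1)` in `ℝ³`. -/
theorem hopf_homotopy_dist_mono (B : (Fin 2 → ℝ) → (Fin 2 → ℝ)) (hB0 : B 0 = 0)
    (hdet : ∀ y : Fin 2 → ℝ, y ≠ 0 → y 1 * B y 0 - y 0 * B y 1 < 0)
    (ℓ : ℝ → (Fin 2 → ℝ) → Set (EuclideanSpace ℝ (Fin 3)))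
    (hℓ : ∀ s y, ℓ s y = {x | ∃ t : ℝ,
      x = (WithLp.equiv 2 (Fin 3 → ℝ)).symm
        ![y 0 + t * (s * (-(y 1)) + (1 - s) * B y 0),
          y 1 + t * (s * (y 0) + (1 - s) * B y 1), t]}) :
    ∀ y : Fin 2 → ℝ, ∀ s ∈ Set.Icc (0 : ℝ) 1,
      Metric.infDist 0 (ℓ 0 y) ≤ Metric.infDist 0 (ℓ s y) := by
  intro y s hs
  obtain ⟨hs0, hs1⟩ := hs
  have hab : y 1 * B y 0 - y 0 * B y 1 ≤ 0 := by
    rcases eq_or_ne y 0 with h | h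
    · simp [h, hB0]
    · exact (hdet y h).le
  -- the minimizing parameter on ℓ 0 y
  have hx₀mem : (WithLp.equiv 2 (Fin 3 → ℝ)).symm
      ![y 0 + (-(y 0 * B y 0 + y 1 * B y 1) / (B y 0 ^ 2 + B y 1 ^ 2 + 1)) *
          ((0:ℝ) * (-(y 1)) + (1 - 0) * B y 0),
        y 1 + (-(y 0 * B y 0 + y 1 * B y 1) / (B y 0 ^ 2 + B y 1 ^ 2 + 1)) *
          ((0:ℝ) * (y 0) + (1 - 0) * B y 1),
        -(y 0 * B y 0 + y 1 * B y 1) / (B y 0 ^ 2 + B y 1 ^ 2 + 1)] ∈ ℓ 0 y := by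
    rw [hℓ]
    exact ⟨_, rfl⟩
  have hle1 := Metric.infDist_le_dist_of_mem (x := (0 : EuclideanSpace ℝ (Fin 3))) hx₀mem
  have hne : (ℓ s y).Nonempty := by
    rw [hℓ]
    exact ⟨_, 0, rfl⟩
  have hpt : ∀ x ∈ ℓ s y,
      dist (0 : EuclideanSpace ℝ (Fin 3)) ((WithLp.equiv 2 (Fin 3 → ℝ)).symm
      ![y 0 + (-(y 0 * B y 0 + y 1 * B y 1) / (B y 0 ^ 2 + B y 1 ^ 2 + 1)) *
          ((0:ℝ) * (-(y 1)) + (1 - 0) * B y 0),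
        y 1 + (-(y 0 * B y 0 + y 1 * B y 1) / (B y 0 ^ 2 + B y 1 ^ 2 + 1)) *
          ((0:ℝ) * (y 0) + (1 - 0) * B y 1),
        -(y 0 * B y 0 + y 1 * B y 1) / (B y 0 ^ 2 + B y 1 ^ 2 + 1)]) ≤ dist 0 x := by
    intro x hx
    rw [hℓ] at hx
    obtain ⟨t, rfl⟩ := hx
    rw [dist_zero_left, dist_zero_left]
    rw [EuclideanSpace.norm_eq, EuclideanSpace.norm_eq]
    apply Real.sqrt_le_sqrt
    simp only [WithLp.equiv_symm_apply, WithLp.ofLp_toLp, Fin.sum_univ_three, Matrix.cons_val_zero,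
      Matrix.cons_val_one, Matrix.head_cons, Matrix.cons_val_two, Matrix.tail_cons,
      Real.norm_eq_abs, sq_abs]
    have := hopf_core (y 0) (y 1) (B y 0) (B y 1) s t hs0 hs1 hab
    nlinarith [this]
  have hle2 : dist (0 : EuclideanSpace ℝ (Fin 3)) ((WithLp.equiv 2 (Fin 3 → ℝ)).symm
      ![y 0 + (-(y 0 * B y 0 + y 1 * B y 1) / (B y 0 ^ 2 + B y 1 ^ 2 + 1)) *
          ((0:ℝ) * (-(y 1)) + (1 - 0) * B y 0),
        y 1 + (-(y 0 * B y 0 + y 1 * B y 1) / (B y 0 ^ 2 + B y 1 ^ 2 + 1)) *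
          ((0:ℝ) * (y 0) + (1 - 0) * B y 1),
        -(y 0 * B y 0 + y 1 * B y 1) / (B y 0 ^ 2 + B y 1 ^ 2 + 1)]) ≤
      Metric.infDist 0 (ℓ s y) := by
    by_contra h
    push_neg at h
    obtain ⟨x, hx, hlt⟩ := (Metric.infDist_lt_iff hne).1 h
    exact absurd (hpt x hx) (not_le.2 hlt)
  linarith
end

section
/- Let B : ℝ² → ℝ² be continuous and injective with y₂B₁(y) − y₁B₂(y) < 0 for all y ≠ 0 (where B=(B₁,B₂)). For s ∈ (0,1], the map B_s(y) = s·(−y₂, y₁) + (1−s)·B(y) satisfies |B_s(y)|² ≥ s²·|y|² for all y, and B_s is surjective onto ℝ². -/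
open Complex Metric Set Real Finset

set_option linter.unusedVariables false
set_option linter.unreachableTactic false
set_option linter.unusedTactic false
set_option linter.deprecated false

section AuxiliaryLemmas
/-- Cross-term expansion lower bound in `ℂ`. -/
lemma aux_cross_bound (t : ℝ) (ht0 : 0 ≤ t) (ht1 : t ≤ 1) (z b : ℂ)
    (hcross : z = 0 ∨ z.im * b.re - z.re * b.im < 0) :
    t ^ 2 * ‖z‖ ^ 2 ≤ ‖(t * I * z + (1 - t) * b)‖ ^ 2 := by
  rw [Complex.sq_norm, Complex.sq_norm, Complex.normSq_apply, Complex.normSq_apply]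
  simp only [Complex.add_re, Complex.add_im, Complex.mul_re, Complex.mul_im,
    Complex.I_re, Complex.I_im, Complex.ofReal_re, Complex.ofReal_im,
    Complex.sub_re, Complex.sub_im, Complex.one_re, Complex.one_im]
  rcases hcross with h | h
  · simp [h]
    nlinarith [sq_nonneg ((1-t)*b.re), sq_nonneg ((1-t)*b.im)]
  · nlinarith [mul_nonneg (mul_nonneg ht0 (sub_nonneg.2 ht1)) (neg_nonneg.2 h.le),
      sq_nonneg ((1-t)*b.re), sq_nonneg ((1-t)*b.im)]

lemma aux_exists_log (G : ℂ → ℂ) (hG : Continuous G) (hG0 : ∀ z, G z ≠ 0) (R : ℝ) :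
    ∃ g : ℂ → ℂ, ContinuousOn g (closedBall 0 R) ∧
      ∀ z ∈ closedBall 0 R, Complex.exp (g z) = G z := by
  have hK : IsCompact (closedBall (0:ℂ) R) := isCompact_closedBall _ _
  rcases le_or_gt R 0 with hR | hR
  · refine ⟨fun _ => Complex.log (G 0), continuousOn_const, ?_⟩
    intro z hz
    have h0 : ‖z‖ ≤ 0 := le_trans (mem_closedBall_zero_iff.1 hz) hR
    have : z = 0 := norm_le_zero_iff.1 h0
    rw [this, Complex.exp_log (hG0 0)]
  obtain ⟨z₀, hz₀, hmin⟩ := hK.exists_isMinOn (nonempty_closedBall.2 hR.le)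
    (continuous_norm.comp hG).continuousOn
  set ε := ‖G z₀‖ with hε
  have hεpos : 0 < ε := norm_pos_iff.2 (hG0 z₀)
  have hUC : UniformContinuousOn G (closedBall 0 R) :=
    hK.uniformContinuousOn_of_continuous hG.continuousOn
  rw [Metric.uniformContinuousOn_iff] at hUC
  obtain ⟨δ, hδ, hδ'⟩ := hUC ε hεpos
  obtain ⟨n, hn⟩ := exists_nat_gt (R / δ)
  have hn0 : 0 < (n:ℝ) := lt_of_le_of_lt (div_nonneg hR.le hδ.le) hn
  have hnn : n ≠ 0 := by exact_mod_cast hn0.ne'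
  have hmem : ∀ (k : ℕ), k ≤ n → ∀ z ∈ closedBall (0:ℂ) R,
      ((k:ℝ)/n : ℂ) * z ∈ closedBall (0:ℂ) R := by
    intro k hk z hz
    rw [mem_closedBall_zero_iff] at hz ⊢
    rw [norm_mul]
    have h2 : ‖(((k:ℝ)/n : ℂ))‖ ≤ 1 := by
      rw [norm_div, Complex.norm_real, Complex.norm_natCast, Real.norm_natCast]
      exact div_le_one_of_le₀ (by exact_mod_cast hk) hn0.le
    calc ‖(((k:ℝ)/n : ℂ))‖ * ‖z‖ ≤ 1 * R :=
          mul_le_mul h2 hz (norm_nonneg z) zero_le_one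
      _ = R := one_mul R
  have hclose : ∀ (k : ℕ), k < n → ∀ z ∈ closedBall (0:ℂ) R,
      ‖G (((k+1:ℕ):ℝ)/n * z) / G (((k:ℕ):ℝ)/n * z) - 1‖ < 1 := by
    intro k hk z hz
    set a := G (((k:ℕ):ℝ)/n * z) with ha_def
    have ha : a ≠ 0 := hG0 _
    have hka : (((k:ℕ):ℝ)/n : ℂ) * z ∈ closedBall (0:ℂ) R := hmem k hk.le z hz
    have hkb : (((k+1:ℕ):ℝ)/n : ℂ) * z ∈ closedBall (0:ℂ) R := hmem (k+1) hk z hz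
    have hd : dist ((((k+1:ℕ):ℝ)/n : ℂ) * z) ((((k:ℕ):ℝ)/n : ℂ) * z) < δ := by
      have hzR := mem_closedBall_zero_iff.1 hz
      rw [dist_eq_norm, ← sub_mul, norm_mul]
      have h1 : ‖((((k+1:ℕ):ℝ)/n : ℂ) - (((k:ℕ):ℝ)/n : ℂ))‖ = 1/n := by
        have he : ((((k+1:ℕ):ℝ)/n : ℂ) - (((k:ℕ):ℝ)/n : ℂ)) = ((1/n : ℝ) : ℂ) := by
          push_cast; ring
        rw [he, Complex.norm_real]
        exact abs_of_nonneg (by positivity)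
      rw [h1]
      calc 1/(n:ℝ) * ‖z‖ ≤ 1/n * R := mul_le_mul_of_nonneg_left hzR (by positivity)
        _ < δ := by
            rw [div_mul_eq_mul_div, one_mul, div_lt_iff₀ hn0]
            have h3 : R = R/δ*δ := by field_simp
            have h4 := mul_lt_mul_of_pos_right hn hδ
            have h5 : δ*(n:ℝ) = (n:ℝ)*δ := mul_comm _ _
            linarith
    have hGd : dist (G ((((k+1:ℕ):ℝ)/n : ℂ) * z)) a < ε := hδ' _ hkb _ hka hd
    have hεa : ε ≤ ‖a‖ := hmin hka
    rw [div_sub_one ha, norm_div, div_lt_one (norm_pos_iff.2 ha)]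
    calc ‖G ((((k+1:ℕ):ℝ)/n : ℂ) * z) - a‖ < ε := by rw [← dist_eq_norm]; exact hGd
      _ ≤ ‖a‖ := hεa
  refine ⟨fun z => Complex.log (G 0) + ∑ k ∈ Finset.range n,
      Complex.log (G (((k+1:ℕ):ℝ)/n * z) / G (((k:ℕ):ℝ)/n * z)), ?_, ?_⟩
  · apply ContinuousOn.add continuousOn_const
    apply continuousOn_finset_sum
    intro k hk
    rw [Finset.mem_range] at hk
    apply ContinuousOn.clog
    · exact (hG.comp (continuous_const.mul continuous_id)).continuousOn.div
        ((hG.comp (continuous_const.mul continuous_id)).continuousOn)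
        (fun z _ => hG0 _)
    · intro z hz
      have he : G ((((k+1:ℕ):ℝ):ℂ)/n * z) / G ((((k:ℕ):ℝ):ℂ)/n * z)
          = 1 + (G ((((k+1:ℕ):ℝ):ℂ)/n * z) / G ((((k:ℕ):ℝ):ℂ)/n * z) - 1) := by ring
      rw [he]
      exact Complex.mem_slitPlane_of_norm_lt_one (hclose k hk z hz)
  · intro z hz
    rw [Complex.exp_add, Complex.exp_sum, Complex.exp_log (hG0 0)]
    have hnC : ((n:ℕ):ℂ) ≠ 0 := Nat.cast_ne_zero.2 hnn
    have key : ∀ m : ℕ, G 0 * ∏ k ∈ Finset.range m,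
        Complex.exp (Complex.log (G (((k+1:ℕ):ℝ)/n * z) / G (((k:ℕ):ℝ)/n * z)))
        = G (((m:ℕ):ℝ)/n * z) := by
      intro m
      induction m with
      | zero => simp
      | succ m ih =>
        rw [Finset.prod_range_succ, ← mul_assoc, ih,
          Complex.exp_log (div_ne_zero (hG0 _) (hG0 _)),
          mul_div_cancel₀ _ (hG0 _)]
    rw [key n]
    congr 1
    push_cast
    rw [div_self hnC, one_mul]

lemma aux_circle_contra (w : ℂ) (R : ℝ) (hR : ‖w‖ < R) (g : ℂ → ℂ)
    (hg : ContinuousOn g (closedBall 0 R))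
    (hexp : ∀ θ : ℝ, Complex.exp (g ((R:ℂ) * Complex.exp (θ * I))) =
      I * ((R:ℂ) * Complex.exp (θ * I)) - w) : False := by
  have hR0 : 0 < R := lt_of_le_of_lt (norm_nonneg w) hR
  have hRC : (R:ℂ) ≠ 0 := by exact_mod_cast hR0.ne'
  have hIR : I * (R:ℂ) ≠ 0 := mul_ne_zero I_ne_zero hRC
  set p : ℝ → ℂ := fun θ => (R:ℂ) * Complex.exp (θ * I) with hp
  have hpc : Continuous p := by
    apply continuous_const.mul
    exact Complex.continuous_exp.comp (Complex.continuous_ofReal.mul continuous_const)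
  have hpnorm : ∀ θ, ‖p θ‖ = R := by
    intro θ
    rw [hp]
    simp only [norm_mul, Complex.norm_real, Complex.norm_exp_ofReal_mul_I, mul_one,
      Real.norm_eq_abs]
    exact abs_of_nonneg hR0.le
  have hpmem : ∀ θ, p θ ∈ closedBall (0:ℂ) R := fun θ => by
    rw [mem_closedBall_zero_iff, hpnorm]
  set u : ℝ → ℂ := fun θ => 1 - w / (I * R) * Complex.exp ((-θ:ℝ) * I) with hu
  have hunorm : ∀ θ, ‖u θ - 1‖ < 1 := by
    intro θ
    rw [hu]
    simp only [sub_sub_cancel_left, norm_neg, norm_mul, norm_div,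
      Complex.norm_exp_ofReal_mul_I, mul_one, Complex.norm_I, Complex.norm_real,
      one_mul, Real.norm_eq_abs]
    rw [_root_.abs_of_nonneg hR0.le, div_lt_one hR0]
    exact hR
  have huslit : ∀ θ, u θ ∈ Complex.slitPlane := by
    intro θ
    have he : u θ = 1 + (u θ - 1) := by ring
    rw [he]
    exact Complex.mem_slitPlane_of_norm_lt_one (hunorm θ)
  have hune : ∀ θ, u θ ≠ 0 := fun θ => Complex.slitPlane_ne_zero (huslit θ)
  set c : ℝ → ℂ := fun θ => Complex.log (u θ) with hc
  have hcc : Continuous c := by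
    apply Continuous.clog _ huslit
    exact continuous_const.sub (continuous_const.mul
      (Complex.continuous_exp.comp ((Complex.continuous_ofReal.comp continuous_neg).mul
        continuous_const)))
  have hkey : ∀ θ : ℝ, I * p θ - w = Complex.exp (Complex.log (I * R) + θ * I + c θ) := by
    intro θ
    rw [Complex.exp_add, Complex.exp_add, Complex.exp_log hIR, hc]
    simp only
    rw [Complex.exp_log (hune θ), hu, hp]
    simp only
    rw [show (((-θ:ℝ)):ℂ) * I = -((θ:ℂ)*I) by push_cast; ring, Complex.exp_neg]
    have hez : Complex.exp ((θ:ℂ)*I) ≠ 0 := Complex.exp_ne_zero _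
    field_simp
  have hne : ∀ θ, I * p θ - w ≠ 0 := by
    intro θ h
    have h1 : ‖I * p θ‖ = R := by rw [norm_mul, Complex.norm_I, one_mul, hpnorm]
    rw [sub_eq_zero.1 h] at h1
    exact absurd h1 (ne_of_lt hR)
  set d : ℝ → ℂ := fun θ => g (p θ) - (Complex.log (I * R) + θ * I + c θ) with hd
  have hdint : ∀ θ, ∃ k : ℤ, d θ = k * (2 * π * I) := by
    intro θ
    rw [← Complex.exp_eq_one_iff, hd]
    simp only
    rw [Complex.exp_sub, ← hkey θ]
    have : Complex.exp (g (p θ)) = I * p θ - w := hexp θ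
    rw [this, div_self (hne θ)]
  have hdc : ContinuousOn d (Icc 0 (2*π)) := by
    apply ContinuousOn.sub
    · exact hg.comp hpc.continuousOn (fun θ _ => hpmem θ)
    · apply ContinuousOn.add
      · apply ContinuousOn.add continuousOn_const
        exact (Complex.continuous_ofReal.mul continuous_const).continuousOn
      · exact hcc.continuousOn
  have hper : p (2*π) = p 0 := by
    rw [hp]
    simp only
    congr 1
    rw [show (((2*π:ℝ)):ℂ) * I = 2*(π:ℂ)*I by push_cast; ring, Complex.exp_two_pi_mul_I,
      show (((0:ℝ)):ℂ) * I = 0 by push_cast; ring, Complex.exp_zero]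
  have hucper : u (2*π) = u 0 := by
    have e0 : (((-(0:ℝ)):ℝ):ℂ) * I = 0 := by norm_num
    have e2 : (((-(2*π):ℝ)):ℂ) * I = -(2*(π:ℂ)*I) := by push_cast; ring
    rw [hu]
    simp only [e0, e2, Complex.exp_zero, Complex.exp_neg, Complex.exp_two_pi_mul_I, inv_one]
  have hcper : c (2*π) = c 0 := by
    rw [hc]
    simp only
    rw [hucper]
  have hdiff : d (2*π) - d 0 = -(2*(π:ℂ)*I) := by
    rw [hd]
    simp only
    rw [hper, hcper]
    push_cast
    ring
  have him : ∀ θ, ∃ k : ℤ, (d θ).im = k * (2*π) := by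
    intro θ
    obtain ⟨k, hk⟩ := hdint θ
    refine ⟨k, ?_⟩
    rw [hk]
    simp [Complex.mul_im, Complex.mul_re]
  have hdimc : ContinuousOn (fun θ => (d θ).im) (Icc 0 (2*π)) :=
    Complex.continuous_im.comp_continuousOn hdc
  have h2π : (0:ℝ) < 2*π := by positivity
  have hsub : Set.uIcc ((fun θ => (d θ).im) 0) ((fun θ => (d θ).im) (2*π)) ⊆
      (fun θ => (d θ).im) '' Set.uIcc 0 (2*π) := by
    exact intermediate_value_uIcc (by rwa [Set.uIcc_of_le h2π.le])
  have hval : (d (2*π)).im = (d 0).im - 2*π := by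
    have h5 := congrArg Complex.im hdiff
    simp only [Complex.sub_im] at h5
    simp at h5
    linarith
  have hmemiv : (d 0).im - π ∈ Set.uIcc ((d 0).im) ((d (2*π)).im) := by
    rw [hval, Set.mem_uIcc]
    right
    constructor <;> linarith [Real.pi_pos]
  obtain ⟨θx, _, hθ⟩ := hsub hmemiv
  obtain ⟨k, hk⟩ := him θx
  obtain ⟨k0, hk0⟩ := him 0
  have heq : (k:ℝ) * (2*π) = (k0:ℝ) * (2*π) - π := by
    rw [← hk]
    simp only at hθ
    rw [hθ, hk0]
  have hz : ((2*k - 2*k0 + 1 : ℤ) : ℝ) * π = 0 := by push_cast; linarith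
  rcases mul_eq_zero.1 hz with h | h
  · have : (2*k - 2*k0 + 1 : ℤ) = 0 := by exact_mod_cast h
    omega
  · exact Real.pi_ne_zero h

lemma aux_reim (t : ℝ) (z b : ℂ) :
    ((t:ℂ)*I*z + (1 - (t:ℂ))*b).re = t*(-(z.im)) + (1-t)*b.re ∧
    ((t:ℂ)*I*z + (1 - (t:ℂ))*b).im = t*z.re + (1-t)*b.im := by
  constructor <;>
    simp [Complex.add_re, Complex.add_im, Complex.mul_re, Complex.mul_im] <;> ring


end AuxiliaryLemmas

/-- If `B : ℝ² → ℝ²` is continuous and injective with `y₂B₁(y) − y₁B₂(y) < 0` for `y ≠ 0`,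
then for `s ∈ (0,1]` the map `B_s = s·H + (1−s)·B`, with `H(y) = (−y₂, y₁)`, satisfies
`‖B_s(y)‖² ≥ s²‖y‖²` and is surjective onto `ℝ²`. -/
theorem homotopy_toward_hopf_surjective
    (B : EuclideanSpace ℝ (Fin 2) → EuclideanSpace ℝ (Fin 2))
    (hBc : Continuous B) (hBi : Function.Injective B)
    (hdet : ∀ y, y ≠ 0 → y 1 * B y 0 - y 0 * B y 1 < 0)
    (s : ℝ) (hs : s ∈ Set.Ioc (0 : ℝ) 1)
    (Bs : EuclideanSpace ℝ (Fin 2) → EuclideanSpace ℝ (Fin 2))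
    (hBs : ∀ y i, Bs y i = s * (if i = 0 then -(y 1) else y 0) + (1 - s) * B y i) :
    (∀ y, s ^ 2 * ‖y‖ ^ 2 ≤ ‖Bs y‖ ^ 2) ∧ Function.Surjective Bs := by
  obtain ⟨hs0, hs1⟩ := hs
  have normsq : ∀ v : EuclideanSpace ℝ (Fin 2), ‖v‖^2 = (v 0)^2 + (v 1)^2 := by
    intro v
    rw [EuclideanSpace.norm_eq, Real.sq_sqrt (by positivity)]
    simp [Fin.sum_univ_two, Real.norm_eq_abs, sq_abs]
  constructor
  · -- part 1
    intro y
    rw [normsq y, normsq (Bs y), hBs y 0, hBs y 1]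
    norm_num
    rcases eq_or_ne y 0 with rfl | hy
    · have h0 : (0 : EuclideanSpace ℝ (Fin 2)) 0 = 0 := rfl
      have h1 : (0 : EuclideanSpace ℝ (Fin 2)) 1 = 0 := rfl
      rw [h0, h1]
      nlinarith [sq_nonneg (s * -(0:ℝ) + (1 - s) * B 0 0), sq_nonneg (s * (0:ℝ) + (1 - s) * B 0 1)]
    · have h := hdet y hy
      nlinarith [mul_nonneg (mul_nonneg hs0.le (sub_nonneg.2 hs1)) (neg_nonneg.2 h.le),
        sq_nonneg ((1-s)*B y 0), sq_nonneg ((1-s)*B y 1)]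
  · -- part 2: surjectivity
    intro w
    by_contra hnex
    push_neg at hnex
    -- setup complex identification
    set toE : ℂ → EuclideanSpace ℝ (Fin 2) :=
      fun z => (WithLp.equiv 2 (Fin 2 → ℝ)).symm ![z.re, z.im] with htoE
    have htoE0 : ∀ z, toE z 0 = z.re := fun z => rfl
    have htoE1 : ∀ z, toE z 1 = z.im := fun z => rfl
    have htoEc : Continuous toE := by
      have h1 : Continuous fun z : ℂ => (![z.re, z.im] : Fin 2 → ℝ) := by
        apply continuous_pi
        intro i
        fin_cases i
        · simpa using Complex.continuous_re
        · simpa using Complex.continuous_im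
      exact (PiLp.continuous_toLp 2 (fun _ : Fin 2 => ℝ)).comp h1
    set eC : EuclideanSpace ℝ (Fin 2) → ℂ := fun y => (y 0 : ℂ) + (y 1 : ℂ) * I with heC
    have hre : ∀ y, (eC y).re = y 0 := by intro y; simp [heC]
    have him : ∀ y, (eC y).im = y 1 := by intro y; simp [heC]
    have hecc : Continuous eC := by
      have ha : Continuous fun y : EuclideanSpace ℝ (Fin 2) => y 0 :=
        (continuous_apply (0 : Fin 2)).comp (PiLp.continuous_ofLp 2 (fun _ : Fin 2 => ℝ))
      have hb : Continuous fun y : EuclideanSpace ℝ (Fin 2) => y 1 :=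
        (continuous_apply (1 : Fin 2)).comp (PiLp.continuous_ofLp 2 (fun _ : Fin 2 => ℝ))
      exact (Complex.continuous_ofReal.comp ha).add
        ((Complex.continuous_ofReal.comp hb).mul continuous_const)
    set β : ℂ → ℂ := fun z => eC (B (toE z)) with hβ
    have hβc : Continuous β := hecc.comp (hBc.comp htoEc)
    set wC : ℂ := eC w with hwC
    -- the cross condition in ℂ
    have hcross : ∀ z : ℂ, z ≠ 0 → z.im * (β z).re - z.re * (β z).im < 0 := by
      intro z hz
      have hzE : toE z ≠ 0 := by
        intro h
        apply hz
        have h0 : toE z 0 = 0 := by rw [h]; rfl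
        have h1 : toE z 1 = 0 := by rw [h]; rfl
        rw [htoE0] at h0
        rw [htoE1] at h1
        exact Complex.ext h0 h1
      have h := hdet (toE z) hzE
      rw [htoE0, htoE1] at h
      rw [hβ]
      simp only
      rw [hre, him]
      exact h
    -- nonattainment in ℂ
    have hφ : ∀ z : ℂ, (s:ℂ)*I*z + (1 - (s:ℂ))*β z ≠ wC := by
      intro z h
      apply hnex (toE z)
      have hre' := congrArg Complex.re h
      have him' := congrArg Complex.im h
      rw [(aux_reim s z (β z)).1] at hre'
      rw [(aux_reim s z (β z)).2] at him'
      simp only [hβ, hwC] at hre' him'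
      simp only [hre, him] at hre' him'
      ext i
      fin_cases i
      · rw [hBs]
        simpa [htoE0, htoE1] using hre'
      · rw [hBs]
        simpa [htoE0, htoE1] using him'
    -- interpolation parameter
    set ρ : ℝ := (‖wC‖ + 1)/s with hρ
    have hρpos : 0 < ρ := by positivity
    have hsρ : s * ρ = ‖wC‖ + 1 := by
      rw [hρ]; field_simp
    have hρw : ‖wC‖ + 1 ≤ ρ := by
      rw [hρ, le_div_iff₀ hs0]
      nlinarith [norm_nonneg wC]
    set R : ℝ := ρ + 1 with hR
    set τ : ℝ → ℝ := fun r => min 1 (s + max 0 (r - ρ)) with hτ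
    have hτs : ∀ r, s ≤ τ r := by
      intro r
      rw [hτ]
      simp only [le_min_iff]
      exact ⟨hs1, by nlinarith [le_max_left (0:ℝ) (r - ρ)]⟩
    have hτ1 : ∀ r, τ r ≤ 1 := fun r => min_le_left _ _
    have hτlow : ∀ r, r ≤ ρ → τ r = s := by
      intro r hr
      rw [hτ]
      simp only
      rw [max_eq_left (by linarith), add_zero, min_eq_right hs1]
    have hτhigh : ∀ r, R ≤ r → τ r = 1 := by
      intro r hr
      rw [hτ]
      simp only
      rw [max_eq_right (by rw [hR] at hr; linarith), min_eq_left (by nlinarith)]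
    have hτc : Continuous τ := by
      rw [hτ]
      exact continuous_const.min (continuous_const.add
        (continuous_const.max (continuous_id.sub continuous_const)))
    -- the global nonvanishing map
    set G : ℂ → ℂ := fun z =>
      ((τ (‖z‖) : ℝ) : ℂ) * I * z + (1 - ((τ (‖z‖) : ℝ) : ℂ)) * β z - wC
      with hG
    have hGc : Continuous G := by
      rw [hG]
      apply Continuous.sub _ continuous_const
      apply Continuous.add
      · exact ((Complex.continuous_ofReal.comp (hτc.comp continuous_norm)).mul
          continuous_const).mul continuous_id
      · exact (continuous_const.sub
          (Complex.continuous_ofReal.comp (hτc.comp continuous_norm))).mul hβc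
    have hG0 : ∀ z, G z ≠ 0 := by
      intro z h
      rw [hG] at h
      simp only at h
      rw [sub_eq_zero] at h
      rcases le_or_gt (‖z‖) ρ with hle | hgt
      · rw [hτlow _ hle] at h
        exact hφ z h
      · set t := τ (‖z‖) with ht
        have hzne : z ≠ 0 := by
          intro h0
          rw [h0] at hgt
          simp at hgt
          linarith
        have hlow := aux_cross_bound t (le_trans hs0.le (hτs _)) (hτ1 _) z (β z)
          (Or.inr (hcross z hzne))
        rw [h] at hlow
        have h1 : s * ρ ≤ t * ‖z‖ :=
          mul_le_mul (hτs _) hgt.le hρpos.le (le_trans hs0.le (hτs _))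
        rw [hsρ] at h1
        nlinarith [norm_nonneg wC, norm_nonneg z]
    -- boundary values
    have hRρ : ρ ≤ R := by rw [hR]; linarith
    have hGbd : ∀ θ : ℝ, G ((R:ℂ) * Complex.exp (θ * I)) =
        I * ((R:ℂ) * Complex.exp (θ * I)) - wC := by
      intro θ
      have habs : ‖(R:ℂ) * Complex.exp (θ * I)‖ = R := by
        rw [norm_mul, Complex.norm_exp_ofReal_mul_I, mul_one, Complex.norm_real,
          Real.norm_eq_abs, _root_.abs_of_nonneg (by linarith)]
      rw [hG]
      simp only
      rw [habs, hτhigh R le_rfl]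
      push_cast
      ring
    -- continuous logarithm and contradiction
    obtain ⟨g, hgc, hge⟩ := aux_exists_log G hGc hG0 R
    apply aux_circle_contra wC R _ g hgc
    · intro θ
      have hmem : (R:ℂ) * Complex.exp (θ * I) ∈ closedBall (0:ℂ) R := by
        rw [mem_closedBall_zero_iff, norm_mul,
          Complex.norm_exp_ofReal_mul_I, mul_one, Complex.norm_real,
          Real.norm_eq_abs, _root_.abs_of_nonneg (by linarith)]
      rw [hge _ hmem, hGbd θ]
    · have : ‖wC‖ + 1 ≤ ρ := hρw
      rw [hR]
      linarith
end

section
/- Let M ⊆ ℝ^n be a set of pairwise disjoint affine p-planes covering ℝ^n, such that the map V : ℝ^n → Grassmannian sending a point to the direction subspace of the unique plane through it is continuous. If (Pₙ) is a sequence of planes of the fibration converging (in the affine Grassmannian, i.e., directions converge and closest points to the origin converge) to an affine p-plane P, then P belongs to M. -/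
open scoped RealInnerProductSpace

/-- An affine `p`-plane in `ℝⁿ` is encoded as a pair `(P, v)` where `P` is the orthogonal
projection onto its direction subspace and `v` is its point closest to the origin. -/
def affinePlane {n : ℕ}
    (P : (EuclideanSpace ℝ (Fin n) →L[ℝ] EuclideanSpace ℝ (Fin n)) × EuclideanSpace ℝ (Fin n)) :
    Set (EuclideanSpace ℝ (Fin n)) :=
  {x | ∃ w, x = P.2 + P.1 w}

/-- The set of fibers of a continuous fibration of `ℝⁿ` by pairwise disjoint affine `p`-planes
is closed in the affine Grassmannian: a limit of fibers is a fiber. -/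
theorem fibration_fibers_closed (n p : ℕ)
    (M : Set ((EuclideanSpace ℝ (Fin n) →L[ℝ] EuclideanSpace ℝ (Fin n)) ×
      EuclideanSpace ℝ (Fin n)))
    (hM : ∀ P ∈ M, P.1.comp P.1 = P.1 ∧ (∀ x y, ⟪P.1 x, y⟫ = ⟪x, P.1 y⟫) ∧
      Module.finrank ℝ (LinearMap.range P.1.toLinearMap) = p ∧ P.1 P.2 = 0)
    (hcover : ∀ x, ∃ P ∈ M, x ∈ affinePlane P)
    (hdisj : ∀ P ∈ M, ∀ Q ∈ M, P ≠ Q → affinePlane P ∩ affinePlane Q = ∅)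
    (V : EuclideanSpace ℝ (Fin n) →
      (EuclideanSpace ℝ (Fin n) →L[ℝ] EuclideanSpace ℝ (Fin n)))
    (hV : Continuous V)
    (hVfib : ∀ x, ∀ P ∈ M, x ∈ affinePlane P → V x = P.1)
    (f : ℕ → (EuclideanSpace ℝ (Fin n) →L[ℝ] EuclideanSpace ℝ (Fin n)) ×
      EuclideanSpace ℝ (Fin n))
    (hf : ∀ k, f k ∈ M)
    (P : (EuclideanSpace ℝ (Fin n) →L[ℝ] EuclideanSpace ℝ (Fin n)) ×
      EuclideanSpace ℝ (Fin n))
    (hlim : Filter.Tendsto f Filter.atTop (nhds P)) :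
    P ∈ M := by
  have h1 : Filter.Tendsto (fun k => (f k).1) Filter.atTop (nhds P.1) :=
    ((continuous_fst.tendsto P).comp hlim)
  have h2 : Filter.Tendsto (fun k => (f k).2) Filter.atTop (nhds P.2) :=
    ((continuous_snd.tendsto P).comp hlim)
  -- each (f k).2 lies on the plane f k
  have hmem : ∀ k, (f k).2 ∈ affinePlane (f k) := fun k => ⟨0, by simp⟩
  -- V (f k).2 = (f k).1
  have hVf : ∀ k, V ((f k).2) = (f k).1 := fun k => hVfib _ _ (hf k) (hmem k)
  -- V P.2 = P.1 by continuity
  have hVP : V P.2 = P.1 := by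
    have t1 : Filter.Tendsto (fun k => V ((f k).2)) Filter.atTop (nhds (V P.2)) :=
      (hV.tendsto P.2).comp h2
    have t2 : Filter.Tendsto (fun k => V ((f k).2)) Filter.atTop (nhds P.1) := by
      simpa [hVf] using h1
    exact tendsto_nhds_unique t1 t2
  -- P.1 P.2 = 0 by continuity of application
  have happ : P.1 P.2 = 0 := by
    have t1 : Filter.Tendsto (fun k => (f k).1 ((f k).2)) Filter.atTop (nhds (P.1 P.2)) :=
      (isBoundedBilinearMap_apply.continuous.tendsto (P.1, P.2)).comp (h1.prodMk_nhds h2)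
    have t2 : Filter.Tendsto (fun k => (f k).1 ((f k).2)) Filter.atTop (nhds 0) := by
      have : (fun k => (f k).1 ((f k).2)) = fun _ => (0 : EuclideanSpace ℝ (Fin n)) := by
        funext k; exact (hM _ (hf k)).2.2.2
      rw [this]; exact tendsto_const_nhds
    exact tendsto_nhds_unique t1 t2
  obtain ⟨Q, hQ, w, hw⟩ := hcover P.2
  have hQ1 : Q.1 = P.1 := by rw [← hVfib P.2 Q hQ ⟨w, hw⟩, hVP]
  obtain ⟨hidem, _, _, hQ0⟩ := hM Q hQ
  have hw0 : Q.1 w = 0 := by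
    have : Q.1 P.2 = Q.1 w := by
      rw [hw]; simp only [map_add, hQ0, zero_add]
      exact congrFun (congrArg DFunLike.coe hidem) w
    rw [hQ1] at this
    rw [hQ1, ← this, happ]
  have hP2 : P.2 = Q.2 := by rw [hw, hw0, add_zero]
  have : P = Q := Prod.ext hQ1.symm hP2
  rw [this]; exact hQ
end

section
/- Let U ⊆ S^{n-1} be a set of unit directions and v : U → ℝ^n a map with v(u) ⊥ u for all u, such that for all distinct u₁, u₂ ∈ U the vectors u₁, u₂, v(u₁) − v(u₂) are linearly independent. Then the affine lines ℓ(u) = {v(u) + t·u : t ∈ ℝ}, u ∈ U, are pairwise skew: for distinct u₁, u₂ ∈ U with u₁ ≠ ±u₂, the lines ℓ(u₁) and ℓ(u₂) neither intersect nor are parallel; moreover U contains no pair of antipodal points. -/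
open scoped RealInnerProductSpace

/-- If `v` assigns to each unit direction `u ∈ U ⊆ Sⁿ⁻¹` a vector `v(u) ⊥ u` such that
`u₁, u₂, v(u₁) − v(u₂)` are linearly independent for distinct `u₁, u₂ ∈ U`, then the lines
`ℓ(u) = v(u) + ℝu` are pairwise skew (disjoint and non-parallel), and `U` contains no pair
of antipodal points. -/
theorem lines_pairwise_skew (n : ℕ) (U : Set (EuclideanSpace ℝ (Fin n)))
    (hU : ∀ u ∈ U, ‖u‖ = 1)
    (v : EuclideanSpace ℝ (Fin n) → EuclideanSpace ℝ (Fin n))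
    (hperp : ∀ u ∈ U, ⟪v u, u⟫ = 0)
    (hindep : ∀ u₁ ∈ U, ∀ u₂ ∈ U, u₁ ≠ u₂ →
      LinearIndependent ℝ ![u₁, u₂, v u₁ - v u₂]) :
    (∀ u₁ ∈ U, ∀ u₂ ∈ U, u₁ ≠ u₂ → u₁ ≠ -u₂ →
      ({x | ∃ t : ℝ, x = v u₁ + t • u₁} ∩ {x | ∃ t : ℝ, x = v u₂ + t • u₂} = ∅ ∧
        ∀ c : ℝ, c • u₁ ≠ u₂)) ∧
    ∀ u ∈ U, -u ∉ U := by
  constructor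
  · intro u₁ h₁ u₂ h₂ hne _
    have hli := (hindep u₁ h₁ u₂ h₂ hne)
    rw [Fintype.linearIndependent_iff] at hli
    constructor
    · ext x
      simp only [Set.mem_inter_iff, Set.mem_setOf_eq, Set.mem_empty_iff_false,
        iff_false, not_and]
      rintro ⟨t₁, rfl⟩ ⟨t₂, heq⟩
      have hzero : ∑ i : Fin 3, (![t₁, -t₂, (1:ℝ)]) i • (![u₁, u₂, v u₁ - v u₂]) i = 0 := by
        simp [Fin.sum_univ_three]
        have : v u₁ + t₁ • u₁ - (v u₂ + t₂ • u₂) = 0 := by rw [heq]; abel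
        calc t₁ • u₁ + -(t₂ • u₂) + (v u₁ - v u₂)
            = v u₁ + t₁ • u₁ - (v u₂ + t₂ • u₂) := by abel
          _ = 0 := this
      have := hli _ hzero 2
      exact one_ne_zero this
    · intro c hc
      have hzero : ∑ i : Fin 3, (![c, -1, (0:ℝ)]) i • (![u₁, u₂, v u₁ - v u₂]) i = 0 := by
        simp [Fin.sum_univ_three, hc]
      have := hli _ hzero 1
      norm_num at this
  · intro u hu hnu
    have hu0 : u ≠ 0 := by
      intro h; have := hU u hu; rw [h] at this; simp at this
    have hne : u ≠ -u := by
      intro h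
      apply hu0
      have : (2:ℝ) • u = 0 := by
        have : u + u = 0 := by nth_rewrite 1 [h]; abel
        rw [two_smul]; exact this
      simpa using (smul_eq_zero.mp this).resolve_left (by norm_num)
    have hli := hindep u hu (-u) hnu hne
    rw [Fintype.linearIndependent_iff] at hli
    have hzero : ∑ i : Fin 3, (![(1:ℝ), 1, 0]) i • (![u, -u, v u - v (-u)]) i = 0 := by
      simp [Fin.sum_univ_three]
    have := hli _ hzero 0
    norm_num at this
end

section
/- Suppose a collection of pairwise skew lines in ℝ³ is parametrized by a continuous map B : ℝ² → ℝ² with B(0) = 0, where the line through y ∈ ℝ² ⊂ ℝ³ is the graph of t ↦ B(y)t + y, and suppose: (skewness) det(A(y) − A(z)) ≠ 0 for all y ≠ z, where A(y) has columns B(y) and y; and (properness) for every sequence yₙ with no accumulation point, the distances of the corresponding lines to the origin tend to infinity. Then for every horizontal plane P_c = {(x₁, x₂, c)} ⊂ ℝ³, the map g : ℝ² → P_c sending y to the intersection of the line through y with P_c, i.e., g(y) = (B(y)·c + y, c), is a bijection; hence the lines cover all of ℝ³. -/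
open Matrix

lemma exists_zero_of_strong_mono (ε : ℝ) (hε : 0 < ε) (f : ℝ × ℝ → ℝ × ℝ)
    (hf : Continuous f)
    (hm : ∀ a b : ℝ × ℝ,
      ε * ((a.1 - b.1)^2 + (a.2 - b.2)^2) ≤
        ((f a).1 - (f b).1) * (a.1 - b.1) + ((f a).2 - (f b).2) * (a.2 - b.2)) :
    ∃ a, f a = 0 := by
  -- vertical monotonicity
  have key2 : ∀ x t s : ℝ, s ≤ t → (f (x, s)).2 + ε * (t - s) ≤ (f (x, t)).2 := by
    intro x t s hst
    rcases eq_or_lt_of_le hst with h | h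
    · subst h; simp
    · have := hm (x, t) (x, s)
      simp only at this
      nlinarith [this]
  -- existence of root on each vertical line
  have hroot : ∀ x : ℝ, ∃ t, (f (x, t)).2 = 0 := by
    intro x
    set T : ℝ := (|(f (x, 0)).2| + 1) / ε with hT
    have hT0 : 0 ≤ T := by positivity
    have h1 : (0:ℝ) < (f (x, T)).2 := by
      have := key2 x T 0 hT0
      have : (f (x,0)).2 + (|(f (x, 0)).2| + 1) ≤ (f (x,T)).2 := by
        have hεT : ε * (T - 0) = |(f (x, 0)).2| + 1 := by
          rw [hT]; field_simp; ring
        linarith [key2 x T 0 hT0, hεT.le]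
      nlinarith [abs_nonneg ((f (x, 0)).2), le_abs_self ((f (x, 0)).2), neg_abs_le ((f (x, 0)).2)]
    have h0 : (f (x, -T)).2 < 0 := by
      have hεT : ε * (0 - (-T)) = |(f (x, 0)).2| + 1 := by
        rw [hT]; field_simp; ring
      have := key2 x 0 (-T) (by linarith)
      nlinarith [neg_abs_le ((f (x, 0)).2), le_abs_self ((f (x, 0)).2)]
    have hc : ContinuousOn (fun t => (f (x, t)).2) (Set.Icc (-T) T) :=
      (continuous_snd.comp (hf.comp (by continuity))).continuousOn
    have := intermediate_value_Icc (by linarith : (-T:ℝ) ≤ T) hc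
    have h0mem : (0:ℝ) ∈ Set.Icc ((f (x, -T)).2) ((f (x, T)).2) := ⟨h0.le, h1.le⟩
    obtain ⟨t, _, ht⟩ := this h0mem
    exact ⟨t, ht⟩
  choose τ hτ using hroot
  -- τ is continuous
  have hτub : ∀ x t, (0:ℝ) < (f (x, t)).2 → τ x < t := by
    intro x t h
    by_contra hh
    push_neg at hh
    have := key2 x (τ x) t hh
    rw [hτ x] at this
    nlinarith
  have hτlb : ∀ x t, (f (x, t)).2 < 0 → t < τ x := by
    intro x t h
    by_contra hh
    push_neg at hh
    have := key2 x t (τ x) hh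
    rw [hτ x] at this
    nlinarith
  have hτc : Continuous τ := by
    rw [Metric.continuous_iff]
    intro x₀ δ hδ
    have hup : (0:ℝ) < (f (x₀, τ x₀ + δ/2)).2 := by
      have := key2 x₀ (τ x₀ + δ/2) (τ x₀) (by linarith)
      rw [hτ x₀] at this
      nlinarith
    have hdown : (f (x₀, τ x₀ - δ/2)).2 < 0 := by
      have := key2 x₀ (τ x₀) (τ x₀ - δ/2) (by linarith)
      rw [hτ x₀] at this
      nlinarith
    have hcu : Continuous fun x => (f (x, τ x₀ + δ/2)).2 :=
      continuous_snd.comp (hf.comp (by continuity))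
    have hcd : Continuous fun x => (f (x, τ x₀ - δ/2)).2 :=
      continuous_snd.comp (hf.comp (by continuity))
    have hu := (hcu.tendsto x₀).eventually (eventually_gt_nhds hup)
    have hd := (hcd.tendsto x₀).eventually (eventually_lt_nhds hdown)
    obtain ⟨r, hr, hball⟩ := Metric.eventually_nhds_iff_ball.1 (hu.and hd)
    refine ⟨r, hr, fun x hx => ?_⟩
    obtain ⟨h1, h2⟩ := hball x hx
    have l1 := hτub x _ h1
    have l2 := hτlb x _ h2
    rw [Real.dist_eq, abs_sub_lt_iff]
    constructor <;> linarith
  -- ψ and horizontal IVT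
  set ψ : ℝ → ℝ := fun x => (f (x, τ x)).1 with hψ
  have hψc : Continuous ψ := continuous_fst.comp (hf.comp (continuous_id.prodMk hτc))
  have hψmono : ∀ x y : ℝ, ε * (x - y)^2 ≤ (ψ x - ψ y) * (x - y) := by
    intro x y
    have := hm (x, τ x) (y, τ y)
    simp only [hτ] at this ⊢
    nlinarith [sq_nonneg (τ x - τ y)]
  set X : ℝ := (|ψ 0| + 1) / ε with hX
  have hX0 : 0 ≤ X := by positivity
  have hp : 0 < ψ X := by
    have h := hψmono X 0
    have hεX : ε * X = |ψ 0| + 1 := by rw [hX]; field_simp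
    nlinarith [le_abs_self (ψ 0), neg_abs_le (ψ 0)]
  have hn : ψ (-X) < 0 := by
    have h := hψmono 0 (-X)
    have hεX : ε * X = |ψ 0| + 1 := by rw [hX]; field_simp
    nlinarith [le_abs_self (ψ 0), neg_abs_le (ψ 0)]
  obtain ⟨x, _, hx⟩ := intermediate_value_Icc (by linarith : (-X:ℝ) ≤ X)
    hψc.continuousOn ⟨hn.le, hp.le⟩
  exact ⟨(x, τ x), Prod.ext hx (hτ x)⟩

lemma exists_zero_of_mono_proper (f : ℝ × ℝ → ℝ × ℝ) (hf : Continuous f)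
    (hm : ∀ a b : ℝ × ℝ,
      0 ≤ ((f a).1 - (f b).1) * (a.1 - b.1) + ((f a).2 - (f b).2) * (a.2 - b.2))
    (hp : ∀ M : ℝ, ∃ R, ∀ a : ℝ × ℝ, ‖f a‖ ≤ M → ‖a‖ ≤ R) :
    ∃ a, f a = 0 := by
  have hex : ∀ n : ℕ, ∃ a : ℝ × ℝ, f a = -((n:ℝ)+1)⁻¹ • a := by
    intro n
    set ε : ℝ := ((n:ℝ)+1)⁻¹ with hε
    have hε0 : 0 < ε := by positivity
    obtain ⟨a, ha⟩ := exists_zero_of_strong_mono ε hε0 (fun a => f a + ε • a)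
      (hf.add (continuous_const_smul ε))
      (by
        intro a b
        have := hm a b
        simp only [Prod.fst_add, Prod.snd_add, Prod.smul_fst, Prod.smul_snd, smul_eq_mul]
        nlinarith)
    refine ⟨a, ?_⟩
    have : f a + ε • a = 0 := ha
    linear_combination (norm := module) this
  choose a ha using hex
  -- bound on ‖a n‖
  have hb : ∀ n : ℕ, ‖f (a n)‖ ≤ 2 * ‖f 0‖ := by
    intro n
    set ε : ℝ := ((n:ℝ)+1)⁻¹ with hε
    have hε0 : 0 < ε := by positivity
    have h0 := hm (a n) 0
    rw [ha n] at h0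
    simp only [Prod.fst_neg, Prod.snd_neg, Prod.smul_fst, Prod.smul_snd, smul_eq_mul,
      Prod.fst_zero, Prod.snd_zero, sub_zero] at h0
    -- ε * ((a n).1^2 + (a n).2^2) ≤ (f 0).1 * (a n).1... derive ε‖a n‖ ≤ 2‖f 0‖
    have hnorm : ‖a n‖ = max |(a n).1| |(a n).2| := by
      rw [Prod.norm_def, Real.norm_eq_abs, Real.norm_eq_abs]
    have hf0 : ‖f 0‖ = max |(f 0).1| |(f 0).2| := by
      rw [Prod.norm_def, Real.norm_eq_abs, Real.norm_eq_abs]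
    have h1 : ε * ((a n).1^2 + (a n).2^2) ≤ |(f 0).1| * |(a n).1| + |(f 0).2| * |(a n).2| := by
      nlinarith [abs_mul_abs_self ((a n).1), abs_mul_abs_self ((a n).2),
        neg_abs_le ((f 0).1 * (a n).1), le_abs_self ((f 0).1 * (a n).1),
        abs_mul ((f 0).1) ((a n).1), abs_mul ((f 0).2) ((a n).2),
        neg_abs_le ((f 0).2 * (a n).2)]
    have h2 : ε * ‖a n‖^2 ≤ 2 * ‖f 0‖ * ‖a n‖ := by
      rw [hnorm]
      have m1 : |(a n).1| ≤ max |(a n).1| |(a n).2| := le_max_left _ _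
      have m2 : |(a n).2| ≤ max |(a n).1| |(a n).2| := le_max_right _ _
      have m3 : (max |(a n).1| |(a n).2|)^2 ≤ (a n).1^2 + (a n).2^2 := by
        rcases max_cases |(a n).1| |(a n).2| with ⟨h, _⟩ | ⟨h, _⟩ <;>
          rw [h] <;> rw [sq_abs] <;> nlinarith [sq_nonneg ((a n).1), sq_nonneg ((a n).2)]
      have f1 : |(f 0).1| ≤ ‖f 0‖ := hf0 ▸ le_max_left _ _
      have f2 : |(f 0).2| ≤ ‖f 0‖ := hf0 ▸ le_max_right _ _
      have ha1 : 0 ≤ |(a n).1| := abs_nonneg _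
      have ha2 : 0 ≤ |(a n).2| := abs_nonneg _
      have hfn : 0 ≤ ‖f 0‖ := norm_nonneg _
      nlinarith [h1, mul_le_mul f1 m1 ha1 hfn, mul_le_mul f2 m2 ha2 hfn]
    have h3 : ‖f (a n)‖ = ε * ‖a n‖ := by
      rw [ha n, norm_smul, Real.norm_eq_abs, abs_neg, abs_of_pos hε0]
    rw [h3]
    rcases eq_or_lt_of_le (norm_nonneg (a n)) with h | h
    · rw [← h]; simpa using by positivity
    · nlinarith
  obtain ⟨R, hR⟩ := hp (2 * ‖f 0‖)
  have hmem : ∀ n, a n ∈ Metric.closedBall (0 : ℝ × ℝ) R := by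
    intro n
    simpa [Metric.mem_closedBall, dist_zero_right] using hR (a n) (hb n)
  obtain ⟨x, -, φ, hφ, hlim⟩ :=
    (isCompact_closedBall (0 : ℝ × ℝ) R).tendsto_subseq hmem
  refine ⟨x, ?_⟩
  have h1 : Filter.Tendsto (fun k => f (a (φ k))) Filter.atTop (nhds (f x)) :=
    (hf.tendsto x).comp hlim
  have h2 : Filter.Tendsto (fun k => f (a (φ k))) Filter.atTop (nhds 0) := by
    apply squeeze_zero_norm (a := fun k => ((φ k : ℝ)+1)⁻¹ * R)
    · intro k
      rw [ha (φ k), norm_smul, Real.norm_eq_abs, abs_neg,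
        abs_of_pos (by positivity : (0:ℝ) < ((φ k:ℝ)+1)⁻¹)]
      have : ‖a (φ k)‖ ≤ R := by
        simpa [Metric.mem_closedBall, dist_zero_right] using hmem (φ k)
      have h0 : (0:ℝ) ≤ ((φ k:ℝ)+1)⁻¹ := by positivity
      exact mul_le_mul_of_nonneg_left this h0
    · have : Filter.Tendsto (fun k => ((φ k : ℝ)+1)⁻¹) Filter.atTop (nhds 0) := by
        apply Filter.Tendsto.comp tendsto_inv_atTop_zero
        apply Filter.tendsto_atTop_add_const_right
        exact (tendsto_natCast_atTop_atTop (R := ℝ)).comp hφ.tendsto_atTop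
      simpa using this.mul_const R
  exact tendsto_nhds_unique h1 h2

noncomputable abbrev PlaneE := EuclideanSpace ℝ (Fin 2)

lemma sign_const (s : PlaneE → PlaneE → ℝ) (hc : Continuous fun p : PlaneE × PlaneE => s p.1 p.2)
    (hsymm : ∀ y z, s y z = s z y)
    (hs : ∀ y z, y ≠ z → s y z ≠ 0) :
    (∀ y z, y ≠ z → 0 < s y z) ∨ (∀ y z, y ≠ z → s y z < 0) := by
  have hrank : 1 < Module.rank ℝ PlaneE := by
    have h1 : Module.finrank ℝ PlaneE = 2 := finrank_euclideanSpace_fin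
    have h2 : (Module.finrank ℝ PlaneE : Cardinal) = Module.rank ℝ PlaneE := Module.finrank_eq_rank ℝ PlaneE
    rw [← h2, h1]
    exact_mod_cast (by norm_num : (1:ℕ) < 2)
  -- slice lemma
  have hslice : ∀ z y y' : PlaneE, y ≠ z → y' ≠ z → 0 < s y z → 0 < s y' z := by
    intro z y y' hy hy' hpos
    by_contra hneg
    push_neg at hneg
    have hconn := (isConnected_compl_singleton_of_one_lt_rank hrank z).isPreconnected
    have hcs : ContinuousOn (fun w : PlaneE => s w z) {z}ᶜ :=
      (hc.comp (continuous_id.prodMk continuous_const)).continuousOn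
    obtain ⟨w, hw, hw0⟩ := hconn.intermediate_value₂ (a := y') (b := y)
      (Set.mem_compl_singleton_iff.2 hy') (Set.mem_compl_singleton_iff.2 hy)
      hcs continuousOn_const hneg hpos.le
    exact hs w z (Set.mem_compl_singleton_iff.1 hw) hw0
  -- two base points
  set y₀ : PlaneE := (WithLp.equiv 2 (Fin 2 → ℝ)).symm ![0, 0] with hy₀
  set z₀ : PlaneE := (WithLp.equiv 2 (Fin 2 → ℝ)).symm ![1, 0] with hz₀
  have hyz₀ : y₀ ≠ z₀ := by
    intro h
    have := congrArg (fun w : PlaneE => (WithLp.equiv 2 (Fin 2 → ℝ)) w 0) h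
    simp [hy₀, hz₀] at this
  have key : ∀ y z, y ≠ z → (0 < s y z ↔ 0 < s y₀ z₀) := by
    intro y z hyz
    rcases eq_or_ne z z₀ with rfl | hzz
    · exact ⟨fun h => hslice z₀ y y₀ hyz hyz₀ h, fun h => hslice z₀ y₀ y hyz₀ hyz h⟩
    · constructor
      · intro h
        have h1 : 0 < s z₀ z := hslice z y z₀ hyz hzz.symm h
        rw [hsymm] at h1
        exact hslice z₀ z y₀ hzz hyz₀ h1
      · intro h
        have h1 : 0 < s z z₀ := hslice z₀ y₀ z hyz₀ hzz h
        rw [hsymm] at h1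
        exact hslice z z₀ y hzz.symm hyz h1
  rcases lt_or_gt_of_ne (hs y₀ z₀ hyz₀) with h | h
  · right
    intro y z hyz
    rcases lt_or_gt_of_ne (hs y z hyz) with h' | h'
    · exact h'
    · exact absurd ((key y z hyz).1 h') (by linarith)
  · left
    exact fun y z hyz => (key y z hyz).2 h

lemma coord_le_norm {n : ℕ} (x : EuclideanSpace ℝ (Fin n)) (i : Fin n) : |x i| ≤ ‖x‖ := by
  rw [EuclideanSpace.norm_eq]
  have h1 : |x i| ^ 2 ≤ ∑ j, ‖x j‖ ^ 2 := by
    have := Finset.single_le_sum (f := fun j => ‖x j‖ ^ 2)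
      (fun j _ => by positivity) (Finset.mem_univ i)
    simpa [Real.norm_eq_abs] using this
  have h2 := Real.sqrt_le_sqrt h1
  rw [Real.sqrt_sq_eq_abs] at h2
  simpa using h2

lemma norm3_le (u v w : ℝ) :
    ‖(WithLp.equiv 2 (Fin 3 → ℝ)).symm ![u, v, w]‖ ≤ |u| + |v| + |w| := by
  rw [EuclideanSpace.norm_eq]
  have : ∑ i, ‖(WithLp.equiv 2 (Fin 3 → ℝ)).symm ![u, v, w] i‖ ^ 2
      = u ^ 2 + v ^ 2 + w ^ 2 := by
    simp [Fin.sum_univ_three, Real.norm_eq_abs, sq_abs]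
  rw [this]
  have h2 : u ^ 2 + v ^ 2 + w ^ 2 ≤ (|u| + |v| + |w|) ^ 2 := by
    nlinarith [abs_nonneg u, abs_nonneg v, abs_nonneg w, sq_abs u, sq_abs v, sq_abs w,
      abs_mul_abs_self u]
  calc Real.sqrt (u ^ 2 + v ^ 2 + w ^ 2) ≤ Real.sqrt ((|u| + |v| + |w|) ^ 2) :=
        Real.sqrt_le_sqrt h2
    _ = |u| + |v| + |w| := Real.sqrt_sq (by positivity)

/-- Given a skew, proper family of lines in `ℝ³` parametrized over the plane `x₃ = 0` by a
continuous map `B : ℝ² → ℝ²` with `B(0) = 0` (the line through `y` being the graph of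
`t ↦ B(y)t + y`), the map `g(y) = B(y)c + y` to each horizontal plane `x₃ = c` is a
bijection; hence the lines cover all of `ℝ³`. -/
theorem skew_lines_cover (B : EuclideanSpace ℝ (Fin 2) → EuclideanSpace ℝ (Fin 2))
    (hBc : Continuous B) (hB0 : B 0 = 0)
    (A : EuclideanSpace ℝ (Fin 2) → Matrix (Fin 2) (Fin 2) ℝ)
    (hA : ∀ y, A y = !![B y 0, y 0; B y 1, y 1])
    (hskew : ∀ y z, y ≠ z → (A y - A z).det ≠ 0)
    (line : EuclideanSpace ℝ (Fin 2) → Set (EuclideanSpace ℝ (Fin 3)))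
    (hline : ∀ y, line y = {x | ∃ t : ℝ,
      x = (WithLp.equiv 2 (Fin 3 → ℝ)).symm ![B y 0 * t + y 0, B y 1 * t + y 1, t]})
    (hproper : ∀ f : ℕ → EuclideanSpace ℝ (Fin 2),
      (¬ ∃ a, MapClusterPt a Filter.atTop f) →
      Filter.Tendsto (fun k => Metric.infDist 0 (line (f k))) Filter.atTop Filter.atTop) :
    (∀ c : ℝ, Function.Bijective (fun y : EuclideanSpace ℝ (Fin 2) =>
      (WithLp.equiv 2 (Fin 2 → ℝ)).symm ![B y 0 * c + y 0, B y 1 * c + y 1])) ∧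
    ∀ x : EuclideanSpace ℝ (Fin 3), ∃ y, x ∈ line y := by
  classical
  -- the discriminant
  set s : EuclideanSpace ℝ (Fin 2) → EuclideanSpace ℝ (Fin 2) → ℝ := fun y z =>
    (B y 0 - B z 0) * (y 1 - z 1) - (y 0 - z 0) * (B y 1 - B z 1) with hs_def
  have hdet : ∀ y z : EuclideanSpace ℝ (Fin 2), (A y - A z).det = s y z := by
    intro y z
    rw [hA, hA, hs_def]
    simp [Matrix.det_fin_two, Matrix.sub_apply]
  have hs : ∀ y z : EuclideanSpace ℝ (Fin 2), y ≠ z → s y z ≠ 0 := by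
    intro y z hyz
    rw [← hdet]
    exact hskew y z hyz
  -- continuity of coordinates
  have hcoord : ∀ i : Fin 2, Continuous fun y : EuclideanSpace ℝ (Fin 2) => y i := by
    intro i
    exact (continuous_apply i).comp (PiLp.continuous_ofLp 2 fun _ : Fin 2 => ℝ)
  have hscont : Continuous fun p : EuclideanSpace ℝ (Fin 2) × EuclideanSpace ℝ (Fin 2) => s p.1 p.2 := by
    rw [hs_def]
    refine Continuous.sub (Continuous.mul ?_ ?_) (Continuous.mul ?_ ?_)
    · exact ((hcoord 0).comp (hBc.comp continuous_fst)).sub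
        ((hcoord 0).comp (hBc.comp continuous_snd))
    · exact ((hcoord 1).comp continuous_fst).sub ((hcoord 1).comp continuous_snd)
    · exact ((hcoord 0).comp continuous_fst).sub ((hcoord 0).comp continuous_snd)
    · exact ((hcoord 1).comp (hBc.comp continuous_fst)).sub
        ((hcoord 1).comp (hBc.comp continuous_snd))
  have hsymm : ∀ y z : EuclideanSpace ℝ (Fin 2), s y z = s z y := by
    intro y z; rw [hs_def]; ring
  -- injectivity for each c
  have hinj : ∀ c : ℝ, Function.Injective (fun y : EuclideanSpace ℝ (Fin 2) =>
      (WithLp.equiv 2 (Fin 2 → ℝ)).symm ![B y 0 * c + y 0, B y 1 * c + y 1]) := by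
    intro c y z h
    by_contra hne
    apply hs y z hne
    simp only at h
    have c0 : B y 0 * c + y 0 = B z 0 * c + z 0 := by
      have := congrArg (fun w : EuclideanSpace ℝ (Fin 2) => (WithLp.equiv 2 (Fin 2 → ℝ)) w 0) h
      simpa using this
    have c1 : B y 1 * c + y 1 = B z 1 * c + z 1 := by
      have := congrArg (fun w : EuclideanSpace ℝ (Fin 2) => (WithLp.equiv 2 (Fin 2 → ℝ)) w 1) h
      simpa using this
    rw [hs_def]
    linear_combination (B y 0 - B z 0) * c1 - (B y 1 - B z 1) * c0
  -- sign normalization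
  obtain ⟨σ, hσ1, hσ⟩ : ∃ σ : ℝ, |σ| = 1 ∧ ∀ y z : EuclideanSpace ℝ (Fin 2), y ≠ z → 0 < σ * s y z := by
    rcases sign_const s hscont hsymm hs with h | h
    · exact ⟨1, abs_one, fun y z hyz => by simpa using h y z hyz⟩
    · refine ⟨-1, by norm_num, fun y z hyz => ?_⟩
      have := h y z hyz
      nlinarith
  -- the embedding of ℝ × ℝ into E
  set e : ℝ × ℝ → EuclideanSpace ℝ (Fin 2) := fun a => (WithLp.equiv 2 (Fin 2 → ℝ)).symm ![a.1, a.2] with he_def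
  have he0 : ∀ a, e a 0 = a.1 := fun a => by rw [he_def]; simp
  have he1 : ∀ a, e a 1 = a.2 := fun a => by rw [he_def]; simp
  have hecont : Continuous e := by
    rw [he_def]
    refine (PiLp.continuous_toLp 2 fun _ : Fin 2 => ℝ).comp ?_
    refine continuous_pi fun i => ?_
    fin_cases i
    · exact continuous_fst
    · exact continuous_snd
  have heinj : Function.Injective e := by
    intro a b h
    have h0 := congrArg (fun w : EuclideanSpace ℝ (Fin 2) => w 0) h
    have h1 := congrArg (fun w : EuclideanSpace ℝ (Fin 2) => w 1) h
    simp only [he0, he1] at h0 h1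
    exact Prod.ext h0 h1
  -- surjectivity for each c
  have hsurj : ∀ c : ℝ, Function.Surjective (fun y : EuclideanSpace ℝ (Fin 2) =>
      (WithLp.equiv 2 (Fin 2 → ℝ)).symm ![B y 0 * c + y 0, B y 1 * c + y 1]) := by
    intro c q
    rcases eq_or_ne c 0 with rfl | hc
    · refine ⟨q, ?_⟩
      simp only [mul_zero, zero_add]
      rw [Equiv.symm_apply_eq]
      funext i
      fin_cases i <;> simp
    · -- the monotone map
      set f : ℝ × ℝ → ℝ × ℝ := fun a =>
        (σ/c * (-(B (e a) 1 * c + (e a) 1 - q 1)),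
         σ/c * (B (e a) 0 * c + (e a) 0 - q 0)) with hf_def
      have hfc : Continuous f := by
        rw [hf_def]
        refine Continuous.prodMk ?_ ?_
        · exact continuous_const.mul ((((((hcoord 1).comp (hBc.comp hecont)).mul
            continuous_const).add ((hcoord 1).comp hecont)).sub continuous_const).neg)
        · exact continuous_const.mul (((((hcoord 0).comp (hBc.comp hecont)).mul
            continuous_const).add ((hcoord 0).comp hecont)).sub continuous_const)
      have hfm : ∀ a b : ℝ × ℝ,
          ((f a).1 - (f b).1) * (a.1 - b.1) + ((f a).2 - (f b).2) * (a.2 - b.2)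
            = σ * s (e a) (e b) := by
        intro a b
        rw [hf_def, hs_def]
        simp only [he0, he1]
        field_simp
        ring
      have hfm' : ∀ a b : ℝ × ℝ,
          0 ≤ ((f a).1 - (f b).1) * (a.1 - b.1) + ((f a).2 - (f b).2) * (a.2 - b.2) := by
        intro a b
        rw [hfm]
        rcases eq_or_ne a b with rfl | hab
        · have h0 : s (e a) (e a) = 0 := by simp only [hs_def]; ring
          rw [h0, mul_zero]
        · exact (hσ (e a) (e b) (fun h => hab (heinj h))).le
      have hfp : ∀ M : ℝ, ∃ R, ∀ a : ℝ × ℝ, ‖f a‖ ≤ M → ‖a‖ ≤ R := by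
        intro M
        by_contra hcon
        push_neg at hcon
        choose g hg1 hg2 using fun R : ℝ => hcon R
        set u : ℕ → ℝ × ℝ := fun n => g n with hu_def
        have hgrow : ∀ n : ℕ, (n : ℝ) < ‖u n‖ := fun n => hg2 n
        have hbound : ∀ n : ℕ, ‖f (u n)‖ ≤ M := fun n => hg1 n
        -- no cluster point
        have hnocl : ¬ ∃ a : EuclideanSpace ℝ (Fin 2), MapClusterPt a Filter.atTop (fun n => e (u n)) := by
          rintro ⟨w, hw⟩
          have hfreq := mapClusterPt_iff_frequently.1 hw (Metric.ball w 1) (Metric.ball_mem_nhds w one_pos)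
          set C : ℝ := |w 0| + |w 1| + 1 with hC_def
          obtain ⟨n, hn, hmem⟩ := ((Filter.frequently_atTop).1 hfreq) (⌈C⌉₊ + 1)
          have hdist : dist (e (u n)) w < 1 := Metric.mem_ball.1 hmem
          have h0 : |(u n).1 - w 0| ≤ ‖e (u n) - w‖ := by
            have := coord_le_norm (e (u n) - w) 0
            simpa [he0] using this
          have h1 : |(u n).2 - w 1| ≤ ‖e (u n) - w‖ := by
            have := coord_le_norm (e (u n) - w) 1
            simpa [he1] using this
          rw [dist_eq_norm] at hdist
          have hb1 : |(u n).1| ≤ |w 0| + 1 := by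
            have := abs_sub_abs_le_abs_sub (u n).1 (w 0)
            linarith
          have hb2 : |(u n).2| ≤ |w 1| + 1 := by
            have := abs_sub_abs_le_abs_sub (u n).2 (w 1)
            linarith
          have hnormu : ‖u n‖ ≤ C := by
            rw [Prod.norm_def, Real.norm_eq_abs, Real.norm_eq_abs, hC_def]
            refine max_le (by linarith [abs_nonneg (w 1)]) (by linarith [abs_nonneg (w 0)])
          have hnC : C < (n : ℝ) := by
            have : (⌈C⌉₊ : ℝ) < (⌈C⌉₊ : ℝ) + 1 := by linarith
            have hle : ((⌈C⌉₊ + 1 : ℕ) : ℝ) ≤ (n : ℝ) := by exact_mod_cast hn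
            push_cast at hle
            linarith [Nat.le_ceil C]
          linarith [hgrow n]
        have htend := hproper (fun n => e (u n)) hnocl
        -- but distances stay bounded
        set K : ℝ := 2 * (M * |c| + |q 0| + |q 1|) + |c| with hK_def
        have hbd : ∀ n : ℕ, Metric.infDist (0 : EuclideanSpace ℝ (Fin 3))
            (line (e (u n))) ≤ K := by
          intro n
          set y : EuclideanSpace ℝ (Fin 2) := e (u n) with hy_def
          have hmem : (WithLp.equiv 2 (Fin 3 → ℝ)).symm
              ![B y 0 * c + y 0, B y 1 * c + y 1, c] ∈ line y := by
            rw [hline]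
            exact ⟨c, rfl⟩
          have hle := Metric.infDist_le_dist_of_mem (x := (0 : EuclideanSpace ℝ (Fin 3))) hmem
          rw [dist_zero_left] at hle
          have hn3 := norm3_le (B y 0 * c + y 0) (B y 1 * c + y 1) c
          -- bound the two coordinates using ‖f (u n)‖ ≤ M
          have hfn := hbound n
          rw [Prod.norm_def] at hfn
          have hcpos : 0 < |c| := abs_pos.2 hc
          have hsc : |σ/c| = 1/|c| := by
            rw [abs_div, hσ1]
          have hf1 : |σ|/|c| * |q 1 - (B y 1 * c + y 1)| ≤ M := by
            have h := le_trans (le_max_left ‖(f (u n)).1‖ ‖(f (u n)).2‖) hfn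
            rw [hy_def]
            simpa [hf_def, Real.norm_eq_abs, abs_mul, abs_div] using h
          have hf2 : |σ|/|c| * |B y 0 * c + y 0 - q 0| ≤ M := by
            have h := le_trans (le_max_right ‖(f (u n)).1‖ ‖(f (u n)).2‖) hfn
            rw [hy_def]
            simpa [hf_def, Real.norm_eq_abs, abs_mul, abs_div] using h
          rw [hσ1] at hf1 hf2
          have hM0 : 0 ≤ M := le_trans (by positivity) hf1
          have hb1 : |B y 1 * c + y 1 - q 1| ≤ M * |c| := by
            rw [abs_sub_comm]
            rw [div_mul_eq_mul_div, one_mul, div_le_iff₀ hcpos] at hf1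
            linarith
          have hb2 : |B y 0 * c + y 0 - q 0| ≤ M * |c| := by
            rw [div_mul_eq_mul_div, one_mul, div_le_iff₀ hcpos] at hf2
            linarith
          have ha1 : |B y 0 * c + y 0| ≤ M * |c| + |q 0| := by
            have := abs_sub_abs_le_abs_sub (B y 0 * c + y 0) (q 0)
            have h' := abs_add_le (B y 0 * c + y 0 - q 0) (q 0)
            simp only [sub_add_cancel] at h'
            linarith
          have ha2 : |B y 1 * c + y 1| ≤ M * |c| + |q 1| := by
            have h' := abs_add_le (B y 1 * c + y 1 - q 1) (q 1)
            simp only [sub_add_cancel] at h'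
            linarith
          rw [hK_def]
          linarith [abs_nonneg (q 0), abs_nonneg (q 1)]
        obtain ⟨n, hn⟩ := (Filter.tendsto_atTop.1 htend (K + 1)).exists
        linarith [hbd n]
      obtain ⟨a, hf0⟩ := exists_zero_of_mono_proper f hfc hfm' hfp
      refine ⟨e a, ?_⟩
      rw [hf_def] at hf0
      have hσc : σ/c ≠ 0 := by
        intro h
        rcases div_eq_zero_iff.1 h with h | h
        · rw [h] at hσ1; simp at hσ1
        · exact hc h
      have h1 : σ/c * (-(B (e a) 1 * c + (e a) 1 - q 1)) = 0 := by
        have := congrArg Prod.fst hf0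
        simpa using this
      have h2 : σ/c * (B (e a) 0 * c + (e a) 0 - q 0) = 0 := by
        have := congrArg Prod.snd hf0
        simpa using this
      have e1 : B (e a) 1 * c + (e a) 1 = q 1 := by
        rcases mul_eq_zero.1 h1 with h | h
        · exact absurd h hσc
        · linarith [neg_eq_zero.1 h]
      have e0 : B (e a) 0 * c + (e a) 0 = q 0 := by
        rcases mul_eq_zero.1 h2 with h | h
        · exact absurd h hσc
        · linarith
      simp only
      rw [Equiv.symm_apply_eq]
      funext i
      fin_cases i <;> simp [e0, e1]
  refine ⟨fun c => ⟨hinj c, hsurj c⟩, ?_⟩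
  -- covering
  intro x
  obtain ⟨y, hy⟩ := hsurj (x 2) ((WithLp.equiv 2 (Fin 2 → ℝ)).symm ![x 0, x 1])
  refine ⟨y, ?_⟩
  rw [hline]
  refine ⟨x 2, ?_⟩
  simp only at hy
  have h0 : B y 0 * x 2 + y 0 = x 0 := by
    have := congrArg (fun w : EuclideanSpace ℝ (Fin 2) => (WithLp.equiv 2 (Fin 2 → ℝ)) w 0) hy
    simpa using this
  have h1 : B y 1 * x 2 + y 1 = x 1 := by
    have := congrArg (fun w : EuclideanSpace ℝ (Fin 2) => (WithLp.equiv 2 (Fin 2 → ℝ)) w 1) hy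
    simpa using this
  rw [h0, h1, Equiv.eq_symm_apply]
  funext i
  fin_cases i <;> simp
end

section
/- For a positive integer r, the coefficient of t² in the formal power series ((t/log(1+t))²)^r equals (6r² − 5r)/12, and this is an integer if and only if 12 divides r. -/
/-- Let `G = log(1+t)/t` in `ℚ[[t]]`, so that `((t/log(1+t))²)^r = G⁻¹ ^ (2r)`. The
coefficient of `t²` in `((t/log(1+t))²)^r` equals `(6r² − 5r)/12`, and it is an integer if
and only if `12 ∣ r`. -/
theorem coeff_two_t_div_log_sq (r : ℕ) (hr : 0 < r) (G : PowerSeries ℚ)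
    (hG : G = PowerSeries.mk fun n : ℕ => (-1 : ℚ) ^ n / (n + 1)) :
    PowerSeries.coeff (R := ℚ) 2 ((G⁻¹ ^ 2) ^ r) = (6 * (r : ℚ) ^ 2 - 5 * r) / 12 ∧
    ((∃ m : ℤ, PowerSeries.coeff (R := ℚ) 2 ((G⁻¹ ^ 2) ^ r) = m) ↔ 12 ∣ r) := by
  have hg0 : PowerSeries.coeff (R := ℚ) 0 G = 1 := by simp [hG]
  have hg1 : PowerSeries.coeff (R := ℚ) 1 G = -1/2 := by norm_num [hG]
  have hg2 : PowerSeries.coeff (R := ℚ) 2 G = 1/3 := by norm_num [hG]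
  have hc0 : PowerSeries.constantCoeff (R := ℚ) G ≠ 0 := by
    rw [← PowerSeries.coeff_zero_eq_constantCoeff, hg0]; norm_num
  have hunit : G * G⁻¹ = 1 := PowerSeries.mul_inv_cancel G hc0
  set H := G⁻¹ with hH
  have h0 : PowerSeries.coeff (R := ℚ) 0 H = 1 := by
    have := congrArg (PowerSeries.coeff (R := ℚ) 0) hunit
    rw [PowerSeries.coeff_mul, Finset.Nat.sum_antidiagonal_eq_sum_range_succ_mk] at this
    simp [Finset.sum_range_succ, hg0] at this
    simpa using this
  have h1 : PowerSeries.coeff (R := ℚ) 1 H = 1/2 := by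
    have := congrArg (PowerSeries.coeff (R := ℚ) 1) hunit
    rw [PowerSeries.coeff_mul, Finset.Nat.sum_antidiagonal_eq_sum_range_succ_mk] at this
    simp [Finset.sum_range_succ, hg0, hg1, h0, PowerSeries.coeff_one] at this
    linarith
  have h2 : PowerSeries.coeff (R := ℚ) 2 H = -1/12 := by
    have := congrArg (PowerSeries.coeff (R := ℚ) 2) hunit
    rw [PowerSeries.coeff_mul, Finset.Nat.sum_antidiagonal_eq_sum_range_succ_mk] at this
    simp [Finset.sum_range_succ, hg0, hg1, hg2, h0, h1, PowerSeries.coeff_one] at this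
    linarith
  have key : ∀ n : ℕ, PowerSeries.coeff (R := ℚ) 0 (H ^ n) = 1 ∧
      PowerSeries.coeff (R := ℚ) 1 (H ^ n) = n / 2 ∧
      PowerSeries.coeff (R := ℚ) 2 (H ^ n) = (3 * (n : ℚ) ^ 2 - 5 * n) / 24 := by
    intro n
    induction n with
    | zero => norm_num [PowerSeries.coeff_one]
    | succ n ih =>
      obtain ⟨i0, i1, i2⟩ := ih
      have e0 : PowerSeries.coeff (R := ℚ) 0 (H ^ (n + 1)) = 1 := by
        rw [pow_succ, PowerSeries.coeff_mul,
          Finset.Nat.sum_antidiagonal_eq_sum_range_succ_mk]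
        simp [Finset.sum_range_succ, i0, h0]
      have e1 : PowerSeries.coeff (R := ℚ) 1 (H ^ (n + 1)) = (n + 1 : ℕ) / 2 := by
        rw [pow_succ, PowerSeries.coeff_mul,
          Finset.Nat.sum_antidiagonal_eq_sum_range_succ_mk]
        simp [Finset.sum_range_succ, i0, i1, h0, h1]
        push_cast
        ring
      have e2 : PowerSeries.coeff (R := ℚ) 2 (H ^ (n + 1)) =
          (3 * ((n + 1 : ℕ) : ℚ) ^ 2 - 5 * (n + 1 : ℕ)) / 24 := by
        rw [pow_succ, PowerSeries.coeff_mul,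
          Finset.Nat.sum_antidiagonal_eq_sum_range_succ_mk]
        simp [Finset.sum_range_succ, i0, i1, i2, h0, h1, h2]
        push_cast
        ring
      exact ⟨e0, e1, e2⟩
  have hmain : PowerSeries.coeff (R := ℚ) 2 ((H ^ 2) ^ r) = (6 * (r : ℚ) ^ 2 - 5 * r) / 12 := by
    rw [← pow_mul]
    have := (key (2 * r)).2.2
    rw [this]
    push_cast
    ring
  refine ⟨hmain, ?_⟩
  constructor
  · rintro ⟨m, hm⟩
    rw [hmain] at hm
    have hq : (6 * (r : ℚ) ^ 2 - 5 * r) = 12 * m := by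
      field_simp at hm
      linarith
    have hz : (6 * (r : ℤ) ^ 2 - 5 * r) = 12 * m := by
      exact_mod_cast hq
    have hdvd : (12 : ℤ) ∣ (6 * (r : ℤ) ^ 2 - 5 * r) := ⟨m, hz⟩
    have h12 : ((r : ZMod 12)) = 0 := by
      have : ((6 * (r : ℤ) ^ 2 - 5 * r : ℤ) : ZMod 12) = 0 := by
        exact_mod_cast (ZMod.intCast_zmod_eq_zero_iff_dvd _ 12).2 hdvd
      push_cast at this
      revert this
      generalize (r : ZMod 12) = x
      revert x
      decide
    exact (ZMod.natCast_eq_zero_iff r 12).1 h12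
  · rintro ⟨k, rfl⟩
    refine ⟨72 * k ^ 2 - 5 * k, ?_⟩
    rw [hmain]
    push_cast
    ring
end

section
/- If v₁, …, v_p : S^{2q-1} → ℂ^q are continuous maps such that for each y ∈ S^{2q-1} the vectors v₁(y), …, v_p(y) are ℂ-linearly independent and each is Hermitian-orthogonal to y, then S^{2q-1} ⊂ ℝ^{2q} admits 2p+1 pointwise ℝ-linearly independent continuous tangent vector fields, namely v₁, iv₁, …, v_p, iv_p, and iy. -/
lemma sum_range_pair {M : Type*} [AddCommMonoid M] (n : ℕ) (f : ℕ → M) :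
    ∑ i ∈ Finset.range (2 * n), f i = ∑ j ∈ Finset.range n, (f (2 * j) + f (2 * j + 1)) := by
  induction n with
  | zero => simp
  | succ n ih =>
      have h : 2 * (n + 1) = (2 * n + 1) + 1 := by ring
      rw [h, Finset.sum_range_succ, Finset.sum_range_succ, ih, Finset.sum_range_succ]
      abel

/-- If `v₁, …, v_p` are continuous fields on `S^{2q-1} ⊂ ℂ^q` which at each unit vector `y`
are ℂ-linearly independent and Hermitian-orthogonal to `y`, then the `2p+1` fields
`v₁, iv₁, …, v_p, iv_p, iy` are continuous, tangent to the sphere (real-orthogonal to `y`),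
and pointwise ℝ-linearly independent. -/
theorem complex_fields_give_real_fields (p q : ℕ)
    (v : Fin p → EuclideanSpace ℂ (Fin q) → EuclideanSpace ℂ (Fin q))
    (hvc : ∀ j, Continuous (v j))
    (hperp : ∀ j y, ‖y‖ = 1 → (inner ℂ (v j y) y : ℂ) = 0)
    (hindep : ∀ y, ‖y‖ = 1 → LinearIndependent ℂ (fun j => v j y))
    (w : Fin (2 * p + 1) → EuclideanSpace ℂ (Fin q) → EuclideanSpace ℂ (Fin q))
    (hw : ∀ k y, w k y = if h : (k : ℕ) < 2 * p then
        (if (k : ℕ) % 2 = 0 then v ⟨(k : ℕ) / 2, by omega⟩ y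
          else Complex.I • v ⟨(k : ℕ) / 2, by omega⟩ y)
      else Complex.I • y) :
    (∀ k, Continuous (w k)) ∧
    ∀ y, ‖y‖ = 1 →
      (∀ k, (inner ℂ (w k y) y : ℂ).re = 0) ∧
      LinearIndependent ℝ (fun k => w k y) := by
  constructor
  · intro k
    have hwk : w k = fun y => if h : (k : ℕ) < 2 * p then
        (if (k : ℕ) % 2 = 0 then v ⟨(k : ℕ) / 2, by omega⟩ y
          else Complex.I • v ⟨(k : ℕ) / 2, by omega⟩ y)
      else Complex.I • y := funext (hw k)
    rw [hwk]
    by_cases h : (k : ℕ) < 2 * p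
    · simp only [dif_pos h]
      by_cases h2 : (k : ℕ) % 2 = 0
      · simpa [h2] using hvc ⟨(k : ℕ) / 2, by omega⟩
      · simp only [h2, ↓reduceIte]
        exact (hvc ⟨(k : ℕ) / 2, by omega⟩).const_smul Complex.I
    · simp only [dif_neg h]
      exact continuous_id.const_smul Complex.I
  intro y hy
  have hyself : (inner ℂ y y : ℂ) = 1 := by
    rw [inner_self_eq_norm_sq_to_K, hy]; norm_num
  constructor
  · intro k
    rw [hw]
    by_cases h : (k : ℕ) < 2 * p
    · simp only [dif_pos h]
      by_cases h2 : (k : ℕ) % 2 = 0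
      · simp [h2, hperp _ y hy]
      · simp [h2, inner_smul_left, hperp _ y hy]
    · simp [h, inner_smul_left, hyself, hy]
  · rw [Fintype.linearIndependent_iff]
    intro g hg
    -- rewrite the sum
    set F : ℕ → EuclideanSpace ℂ (Fin q) := fun i =>
      if h : i < 2 * p then g ⟨i, by omega⟩ •
        (if i % 2 = 0 then v ⟨i / 2, by omega⟩ y else Complex.I • v ⟨i / 2, by omega⟩ y)
      else 0 with hF
    have key : ∑ k : Fin (2 * p + 1), g k • w k y
        = (∑ j : Fin p, (g ⟨2 * (j : ℕ), by omega⟩ • v j y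
            + g ⟨2 * (j : ℕ) + 1, by omega⟩ • (Complex.I • v j y)))
          + g ⟨2 * p, by omega⟩ • (Complex.I • y) := by
      rw [Fin.sum_univ_castSucc]
      congr 1
      · have h1 : ∀ k : Fin (2 * p), g k.castSucc • w k.castSucc y = F (k : ℕ) := by
          intro k
          have hk : (k : ℕ) < 2 * p := k.isLt
          rw [hw]
          simp only [hF, Fin.coe_castSucc, dif_pos hk]
          rfl
        rw [Finset.sum_congr rfl (fun k _ => h1 k), Fin.sum_univ_eq_sum_range F (2 * p),
          sum_range_pair]
        rw [← Fin.sum_univ_eq_sum_range (fun j => F (2 * j) + F (2 * j + 1)) p]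
        refine Finset.sum_congr rfl (fun j _ => ?_)
        have hj1 : 2 * (j : ℕ) < 2 * p := by omega
        have hj2 : 2 * (j : ℕ) + 1 < 2 * p := by omega
        have e1 : (2 * (j : ℕ)) % 2 = 0 := by omega
        have e2 : (2 * (j : ℕ) + 1) % 2 ≠ 0 := by omega
        have d1 : (2 * (j : ℕ)) / 2 = (j : ℕ) := by omega
        have d2 : (2 * (j : ℕ) + 1) / 2 = (j : ℕ) := by omega
        have ej1 : (⟨2 * (j : ℕ) / 2, by omega⟩ : Fin p) = j := Fin.ext d1
        have ej2 : (⟨(2 * (j : ℕ) + 1) / 2, by omega⟩ : Fin p) = j := Fin.ext d2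
        simp only [hF, dif_pos hj1, dif_pos hj2, if_pos e1, if_neg e2, ej1, ej2]
      · rw [hw]
        have : ¬ ((Fin.last (2 * p) : ℕ) < 2 * p) := by simp
        rw [dif_neg this]
        rfl
    rw [key] at hg
    -- pass to complex scalars
    have smul_coe : ∀ (a : ℝ) (x : EuclideanSpace ℂ (Fin q)), a • x = (a : ℂ) • x := by
      intro a x
      rw [← algebraMap_smul ℂ a x]; rfl
    set z : Fin p → ℂ := fun j =>
      (g ⟨2 * (j : ℕ), by omega⟩ : ℂ) + (g ⟨2 * (j : ℕ) + 1, by omega⟩ : ℂ) * Complex.I with hz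
    set c : ℂ := (g ⟨2 * p, by omega⟩ : ℂ) * Complex.I with hc
    have hC : ∑ j : Fin p, z j • v j y + c • y = 0 := by
      rw [← hg]
      congr 1
      · refine Finset.sum_congr rfl (fun j _ => ?_)
        rw [hz]
        simp only [add_smul, mul_smul, smul_coe]
      · rw [hc, mul_smul, smul_coe]
    -- take inner product with y to kill c
    have h2 := congrArg (fun x => (inner ℂ y x : ℂ)) hC
    have hy0 : ∀ j, (inner ℂ y (v j y) : ℂ) = 0 := by
      intro j
      rw [← inner_conj_symm, hperp j y hy, map_zero]
    simp only [inner_add_right, inner_sum, inner_smul_right, inner_zero_right, hy0, mul_zero,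
      Finset.sum_const_zero, zero_add, hyself, mul_one] at h2
    have hc0 : g ⟨2 * p, by omega⟩ = 0 := by
      have := h2
      rw [hc] at this
      have := mul_eq_zero.mp this
      rcases this with h | h
      · exact_mod_cast h
      · exact absurd h Complex.I_ne_zero
    have hz0 : ∀ j, z j = 0 := by
      have hsum : ∑ j : Fin p, z j • v j y = 0 := by
        rw [hc, hc0] at hC
        simpa using hC
      exact Fintype.linearIndependent_iff.mp (hindep y hy) z hsum
    have hgz : ∀ j : Fin p, g ⟨2 * (j : ℕ), by omega⟩ = 0 ∧ g ⟨2 * (j : ℕ) + 1, by omega⟩ = 0 := by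
      intro j
      have := hz0 j
      rw [hz] at this
      simp only at this
      constructor
      · have := congrArg Complex.re this
        simpa using this
      · have := congrArg Complex.im this
        simpa using this
    intro k
    by_cases h : (k : ℕ) < 2 * p
    · by_cases h2 : (k : ℕ) % 2 = 0
      · have := (hgz ⟨(k : ℕ) / 2, by omega⟩).1
        have hk : (⟨2 * ((k : ℕ) / 2), by omega⟩ : Fin (2 * p + 1)) = k :=
          Fin.ext (show 2 * ((k : ℕ) / 2) = (k : ℕ) by omega)
        rwa [hk] at this
      · have := (hgz ⟨(k : ℕ) / 2, by omega⟩).2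
        have hk : (⟨2 * ((k : ℕ) / 2) + 1, by omega⟩ : Fin (2 * p + 1)) = k :=
          Fin.ext (show 2 * ((k : ℕ) / 2) + 1 = (k : ℕ) by omega)
        rwa [hk] at this
    · have hk : (⟨2 * p, by omega⟩ : Fin (2 * p + 1)) = k :=
        Fin.ext (show 2 * p = (k : ℕ) by omega)
      rwa [hk] at hc0
end
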